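/- arXiv:1611.09077 — 4 statements merged into one kernel-verified Lean document; each statement's English description precedes it below -/
import Mathlib

section
/- Let H be a subgroup of index 2 of a finite group G. Then the number of conjugacy classes of H is congruent modulo 2 to the number of G-conjugacy classes of G that have non-trivial intersection with the complement G \ H. -/
open Finset MulAction

open scoped Classical in
lemma aux_os {G : Type*} [Group G] [Fintype G] (x : G) :
    (univ.filter fun y => IsConj x y).card * (univ.filter fun y => y * x = x * y).card
      = Fintype.card G := by
  have h := MulAction.card_orbit_mul_card_stabilizer_eq_card_group (ConjAct G) x
  have h1 : Fintype.card (orbit (ConjAct G) x) = (univ.filter fun y => IsConj x y).card := by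
    rw [← Fintype.card_subtype]
    apply Fintype.card_congr
    apply Equiv.subtypeEquivRight
    intro y
    rw [ConjAct.mem_orbit_conjAct, isConj_comm]
  have h2 : Fintype.card (stabilizer (ConjAct G) x)
      = (univ.filter fun y => y * x = x * y).card := by
    rw [← Fintype.card_subtype]
    apply Fintype.card_congr
    refine ⟨fun g => ⟨ConjAct.ofConjAct g.1, ?_⟩, fun y => ⟨ConjAct.toConjAct y.1, ?_⟩,
      fun g => rfl, fun y => rfl⟩
    · have := g.2
      rw [MulAction.mem_stabilizer_iff, ConjAct.smul_def] at this
      rw [mul_inv_eq_iff_eq_mul] at this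
      exact this.symm ▸ rfl
    · have := y.2
      rw [MulAction.mem_stabilizer_iff, ConjAct.smul_def, ConjAct.ofConjAct_toConjAct,
        mul_inv_eq_iff_eq_mul]
      exact this
  rw [h1, h2] at h
  rw [h]
  rfl

open scoped Classical in
lemma aux_l1 {G : Type*} [Group G] [Fintype G] (S : Finset G)
    (hS : ∀ (g : G), ∀ x ∈ S, g * x * g⁻¹ ∈ S) :
    ∑ x ∈ S, (univ.filter fun y => y * x = x * y).card
      = Nat.card {c : ConjClasses G | ∃ x ∈ S, ConjClasses.mk x = c} * Fintype.card G := by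
  have hset : Nat.card {c : ConjClasses G | ∃ x ∈ S, ConjClasses.mk x = c}
      = (S.image ConjClasses.mk).card := by
    have he : {c : ConjClasses G | ∃ x ∈ S, ConjClasses.mk x = c}
        = ↑(S.image ConjClasses.mk) := by
      ext c
      simp
    rw [he, Nat.card_coe_set_eq, Set.ncard_coe_finset]
  rw [hset]
  rw [← Finset.sum_fiberwise_of_maps_to (fun x hx => Finset.mem_image_of_mem ConjClasses.mk hx)
    (fun x => (univ.filter fun y => y * x = x * y).card)]
  have key : ∀ c ∈ S.image ConjClasses.mk,
      ∑ x ∈ S.filter (fun x => ConjClasses.mk x = c),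
        (univ.filter fun y => y * x = x * y).card = Fintype.card G := by
    intro c hc
    obtain ⟨x₀, hx₀S, hx₀⟩ := Finset.mem_image.mp hc
    set T := S.filter (fun x => ConjClasses.mk x = c) with hT
    have hTmem : ∀ x, x ∈ T ↔ IsConj x₀ x := by
      intro x
      constructor
      · intro hx
        rw [hT, Finset.mem_filter] at hx
        rw [← ConjClasses.mk_eq_mk_iff_isConj, hx₀, hx.2]
      · intro hco
        obtain ⟨g, hg⟩ := isConj_iff.mp hco
        rw [hT, Finset.mem_filter]
        refine ⟨hg ▸ hS g x₀ hx₀S, ?_⟩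
        rw [← hx₀, ConjClasses.mk_eq_mk_iff_isConj]
        exact hco.symm
    have hOS : ∀ x ∈ T, (univ.filter fun y => y * x = x * y).card * T.card = Fintype.card G := by
      intro x hx
      have hTx : T = univ.filter (fun y => IsConj x y) := by
        ext y
        rw [hTmem, Finset.mem_filter]
        have hxx : IsConj x₀ x := (hTmem x).mp hx
        exact ⟨fun h => ⟨Finset.mem_univ _, hxx.symm.trans h⟩, fun h => hxx.trans h.2⟩
      rw [hTx, mul_comm]
      exact aux_os x
    have hT0 : 0 < T.card :=
      Finset.card_pos.mpr ⟨x₀, (hTmem x₀).mpr (IsConj.refl x₀)⟩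
    have hmul : (∑ x ∈ T, (univ.filter fun y => y * x = x * y).card) * T.card
        = Fintype.card G * T.card := by
      rw [Finset.sum_mul]
      rw [Finset.sum_congr rfl hOS, Finset.sum_const, smul_eq_mul, mul_comm]
    exact Nat.eq_of_mul_eq_mul_right hT0 hmul
  rw [Finset.sum_congr rfl key, Finset.sum_const, smul_eq_mul]

lemma aux_normal {G : Type*} [Group G] (H : Subgroup G) (hidx : H.index = 2)
    (g x : G) (hx : x ∈ H) : g * x * g⁻¹ ∈ H := by
  rw [Subgroup.mul_mem_iff_of_index_two hidx, Subgroup.mul_mem_iff_of_index_two hidx,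
    H.inv_mem_iff]
  tauto

open scoped Classical in
lemma aux_half {G : Type*} [Group G] [Fintype G] (H : Subgroup G) (hidx : H.index = 2)
    (x : G) (y₀ : G) (hy₀c : y₀ * x = x * y₀) (hy₀ : y₀ ∉ H) :
    (univ.filter fun y => y * x = x * y ∧ y ∈ H).card
      = (univ.filter fun y => y * x = x * y ∧ y ∉ H).card := by
  apply Finset.card_bij' (fun y _ => y₀ * y) (fun y _ => y₀⁻¹ * y)
  · intro y hy
    rw [Finset.mem_filter] at hy ⊢
    obtain ⟨-, hyc, hyH⟩ := hy
    refine ⟨Finset.mem_univ _, ?_, ?_⟩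
    · rw [mul_assoc, hyc, ← mul_assoc, hy₀c, mul_assoc]
    · rw [Subgroup.mul_mem_iff_of_index_two hidx]
      tauto
  · intro y hy
    rw [Finset.mem_filter] at hy ⊢
    obtain ⟨-, hyc, hyH⟩ := hy
    have h1 : y₀⁻¹ * x = x * y₀⁻¹ := by
      rw [inv_mul_eq_iff_eq_mul, ← mul_assoc, hy₀c, mul_assoc, mul_inv_cancel, mul_one]
    refine ⟨Finset.mem_univ _, ?_, ?_⟩
    · rw [mul_assoc, hyc, ← mul_assoc, h1, mul_assoc]
    · rw [Subgroup.mul_mem_iff_of_index_two hidx, H.inv_mem_iff]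
      tauto
  · intro y _; rw [← mul_assoc, inv_mul_cancel, one_mul]
  · intro y _; rw [← mul_assoc, mul_inv_cancel, one_mul]

open scoped Classical in
lemma aux_pairs {G : Type*} [Group G] [Fintype G] (H : Subgroup G) :
    ∑ x : G, (univ.filter fun y => y * x = x * y ∧ y ∉ H).card
      = ∑ y ∈ univ.filter (fun y : G => y ∉ H), (univ.filter fun z => z * y = y * z).card := by
  calc ∑ x : G, (univ.filter fun y => y * x = x * y ∧ y ∉ H).card
      = ∑ x : G, ∑ y : G, (if y * x = x * y ∧ y ∉ H then 1 else 0) :=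
        Finset.sum_congr rfl fun x _ => by rw [Finset.card_filter]
    _ = ∑ y : G, ∑ x : G, (if y * x = x * y ∧ y ∉ H then 1 else 0) := Finset.sum_comm
    _ = ∑ y ∈ univ.filter (fun y : G => y ∉ H), ∑ x : G, (if y * x = x * y then 1 else 0) := by
        rw [Finset.sum_filter]
        refine Finset.sum_congr rfl fun y _ => ?_
        by_cases hy : y ∈ H
        · simp [hy]
        · simp [hy]
    _ = ∑ y ∈ univ.filter (fun y : G => y ∉ H), (univ.filter fun z => z * y = y * z).card := by
        refine Finset.sum_congr rfl fun y _ => ?_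
        rw [Finset.card_filter]
        refine Finset.sum_congr rfl fun x _ => ?_
        congr 1
        · simp only [eq_iff_iff]; exact eq_comm

open scoped Classical in
lemma aux_kH {G : Type*} [Group G] [Fintype G] (H : Subgroup G) :
    ∑ x ∈ univ.filter (fun x : G => x ∈ H),
        (univ.filter fun y => y * x = x * y ∧ y ∈ H).card
      = Nat.card (ConjClasses H) * Nat.card H := by
  have h := aux_l1 (G := ↥H) Finset.univ (fun g x _ => Finset.mem_univ _)
  have hset : {c : ConjClasses ↥H | ∃ x ∈ (univ : Finset ↥H), ConjClasses.mk x = c}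
      = Set.univ := by
    ext c
    simp only [Finset.mem_univ, true_and, Set.mem_setOf_eq, Set.mem_univ, iff_true]
    exact ConjClasses.mk_surjective c
  rw [hset] at h
  have hu : Nat.card (Set.univ : Set (ConjClasses ↥H)) = Nat.card (ConjClasses ↥H) := by
    rw [Nat.card_coe_set_eq, Set.ncard_univ]
  rw [hu] at h
  rw [← Nat.card_eq_fintype_card (α := ↥H)] at h
  rw [← h]
  rw [Finset.sum_subtype (p := fun x : G => x ∈ H) (univ.filter fun x : G => x ∈ H)
    (fun x => by simp) (fun x => (univ.filter fun y => y * x = x * y ∧ y ∈ H).card)]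
  refine Finset.sum_congr rfl fun x _ => ?_
  refine Finset.card_bij' (fun y hy => (⟨y, (Finset.mem_filter.mp hy).2.2⟩ : ↥H))
    (fun (y : ↥H) _ => (y : G)) ?_ ?_ ?_ ?_
  · intro y hy
    simp only [Finset.mem_filter, Finset.mem_univ, true_and] at hy ⊢
    exact Subtype.ext hy.1
  · intro y hy
    simp only [Finset.mem_filter, Finset.mem_univ, true_and] at hy ⊢
    refine ⟨?_, y.2⟩
    have h2 := congrArg (Subtype.val) hy
    push_cast at h2
    exact h2
  · intro y _; rfl
  · intro y _; rfl

open scoped Classical in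
lemma aux_pe1 {G : Type*} [Group G] [Fintype G] (H : Subgroup G) (x : G) :
    (univ.filter fun y => y * x = x * y).card
      = (univ.filter fun y => y * x = x * y ∧ y ∈ H).card
        + (univ.filter fun y => y * x = x * y ∧ y ∉ H).card := by
  rw [← Finset.filter_filter, ← Finset.filter_filter]
  exact (Finset.card_filter_add_card_filter_not (fun y => y ∈ H)).symm

open scoped Classical in
lemma aux_pe2 {G : Type*} [Group G] [Fintype G] (H : Subgroup G) (hidx : H.index = 2)
    (x : G) (hx : ¬ ∀ y, y * x = x * y → y ∈ H) :
    (univ.filter fun y => y * x = x * y ∧ y ∈ H).card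
      = (univ.filter fun y => y * x = x * y ∧ y ∉ H).card := by
  push_neg at hx
  obtain ⟨y₀, hy₀c, hy₀⟩ := hx
  exact aux_half H hidx x y₀ hy₀c hy₀

open scoped Classical in
lemma aux_pe3a {G : Type*} [Group G] [Fintype G] (H : Subgroup G)
    (x : G) (hx : ∀ y, y * x = x * y → y ∈ H) :
    (univ.filter fun y => y * x = x * y ∧ y ∉ H).card = 0 := by
  rw [Finset.card_eq_zero, Finset.filter_eq_empty_iff]
  rintro y - ⟨hc, hn⟩
  exact hn (hx y hc)

open scoped Classical in
lemma aux_pe3b {G : Type*} [Group G] [Fintype G] (H : Subgroup G)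
    (x : G) (hx : ∀ y, y * x = x * y → y ∈ H) :
    (univ.filter fun y => y * x = x * y ∧ y ∈ H).card
      = (univ.filter fun y => y * x = x * y).card := by
  congr 1
  apply Finset.filter_congr
  intro y _
  exact ⟨fun h => h.1, fun hc => ⟨hc, hx y hc⟩⟩

/-- Let `H` be a subgroup of index 2 of a finite group `G`. Then the number
of conjugacy classes of `H` is congruent modulo 2 to the number of conjugacy classes of `G`
that have non-trivial intersection with the complement `G \ H`. -/
theorem card_conjClasses_subgroup_modEq_classes_meeting_complement
    (G : Type*) [Group G] [Finite G] (H : Subgroup G) (hidx : H.index = 2) :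
    Nat.card (ConjClasses H) ≡
      Nat.card {c : ConjClasses G | ∃ g : G, ConjClasses.mk g = c ∧ g ∉ H} [MOD 2] := by
  classical
  letI : Fintype G := Fintype.ofFinite G
  set kH := Nat.card (ConjClasses ↥H) with hkH
  have hnorm : ∀ g x : G, x ∈ H → g * x * g⁻¹ ∈ H := aux_normal H hidx
  set sp : G → Prop := fun x => ∀ y, y * x = x * y → y ∈ H with hsp
  have hsp_conj : ∀ (g x : G), sp x → sp (g * x * g⁻¹) := by
    intro g x hx y hy
    have h2 : (g⁻¹ * y * g) * x = x * (g⁻¹ * y * g) := by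
      have h3 : g * ((g⁻¹ * y * g) * x) * g⁻¹ = g * (x * (g⁻¹ * y * g)) * g⁻¹ := by
        calc g * ((g⁻¹ * y * g) * x) * g⁻¹ = y * (g * x * g⁻¹) := by group
          _ = (g * x * g⁻¹) * y := hy
          _ = g * (x * (g⁻¹ * y * g)) * g⁻¹ := by group
      exact mul_left_cancel (mul_right_cancel h3)
    have h4 := hnorm g _ (hx _ h2)
    rwa [show g * (g⁻¹ * y * g) * g⁻¹ = y by group] at h4
  have hsp_conj' : ∀ (g x : G), ¬ sp x → ¬ sp (g * x * g⁻¹) := by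
    intro g x hx hc
    apply hx
    have h5 := hsp_conj g⁻¹ _ hc
    rwa [show g⁻¹ * (g * x * g⁻¹) * g⁻¹⁻¹ = x by group] at h5
  have hsp_mem : ∀ x : G, sp x → x ∈ H := fun x hx => hx x rfl
  -- the finsets
  set Sout : Finset G := univ.filter (fun x : G => x ∉ H) with hSout
  set SH : Finset G := univ.filter (fun x : G => x ∈ H ∧ ¬ sp x) with hSH
  set Ssp : Finset G := univ.filter (fun x : G => sp x) with hSsp
  set S3 : Finset G := univ.filter (fun x : G => ¬ sp x) with hS3
  -- invariance
  have hinvout : ∀ (g : G), ∀ x ∈ Sout, g * x * g⁻¹ ∈ Sout := by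
    intro g x hx
    rw [hSout, Finset.mem_filter] at hx ⊢
    refine ⟨Finset.mem_univ _, fun hc => hx.2 ?_⟩
    have h5 := hnorm g⁻¹ _ hc
    rwa [show g⁻¹ * (g * x * g⁻¹) * g⁻¹⁻¹ = x by group] at h5
  have hinvSH : ∀ (g : G), ∀ x ∈ SH, g * x * g⁻¹ ∈ SH := by
    intro g x hx
    rw [hSH, Finset.mem_filter] at hx ⊢
    exact ⟨Finset.mem_univ _, hnorm g x hx.2.1, hsp_conj' g x hx.2.2⟩
  have hinvSsp : ∀ (g : G), ∀ x ∈ Ssp, g * x * g⁻¹ ∈ Ssp := by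
    intro g x hx
    rw [hSsp, Finset.mem_filter] at hx ⊢
    exact ⟨Finset.mem_univ _, hsp_conj g x hx.2⟩
  have hinvS3 : ∀ (g : G), ∀ x ∈ S3, g * x * g⁻¹ ∈ S3 := by
    intro g x hx
    rw [hS3, Finset.mem_filter] at hx ⊢
    exact ⟨Finset.mem_univ _, hsp_conj' g x hx.2⟩
  -- class-counting identities
  have E1 := aux_l1 Sout hinvout
  have E2 := aux_l1 S3 hinvS3
  have E3 := aux_l1 SH hinvSH
  have E4 := aux_l1 Ssp hinvSsp
  set m := Nat.card {c : ConjClasses G | ∃ x ∈ Sout, ConjClasses.mk x = c} with hm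
  set a := Nat.card {c : ConjClasses G | ∃ x ∈ SH, ConjClasses.mk x = c} with ha
  set s := Nat.card {c : ConjClasses G | ∃ x ∈ Ssp, ConjClasses.mk x = c} with hs
  set c3 := Nat.card {c : ConjClasses G | ∃ x ∈ S3, ConjClasses.mk x = c} with hc3
  set cardG := Fintype.card G with hcardG
  -- pair counting
  have E5 := aux_pairs (G := G) H
  -- sum over univ restricted to S3
  have E7 : ∑ x ∈ S3, (univ.filter fun y => y * x = x * y ∧ y ∉ H).card
      = ∑ x : G, (univ.filter fun y => y * x = x * y ∧ y ∉ H).card := by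
    apply Finset.sum_subset (Finset.subset_univ S3)
    intro x _ hx
    rw [hS3, Finset.mem_filter] at hx
    push_neg at hx
    exact aux_pe3a H x (hx (Finset.mem_univ x))
  have E8 : ∑ x ∈ S3, (univ.filter fun y => y * x = x * y).card
      = 2 * ∑ x ∈ S3, (univ.filter fun y => y * x = x * y ∧ y ∉ H).card := by
    rw [Finset.mul_sum]
    refine Finset.sum_congr rfl fun x hx => ?_
    rw [hS3, Finset.mem_filter] at hx
    have e1 := aux_pe1 H x
    have e2 := aux_pe2 H hidx x hx.2
    omega
  have hcardGpos : 0 < cardG := Fintype.card_pos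
  -- c3 = 2 * m
  have hc32m : c3 = 2 * m := by
    have h1 : c3 * cardG = (2 * m) * cardG := by
      calc c3 * cardG = ∑ x ∈ S3, (univ.filter fun y => y * x = x * y).card := E2.symm
        _ = 2 * ∑ x ∈ S3, (univ.filter fun y => y * x = x * y ∧ y ∉ H).card := E8
        _ = 2 * ∑ x : G, (univ.filter fun y => y * x = x * y ∧ y ∉ H).card := by rw [E7]
        _ = 2 * ∑ y ∈ univ.filter (fun y : G => y ∉ H),
              (univ.filter fun z => z * y = y * z).card := by rw [E5]
        _ = 2 * ∑ y ∈ Sout, (univ.filter fun z => z * y = y * z).card := by rw [← hSout]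
        _ = 2 * (m * cardG) := by rw [E1]
        _ = (2 * m) * cardG := by ring
    exact Nat.eq_of_mul_eq_mul_right hcardGpos h1
  -- c3 = a + m
  have hc3am : c3 = a + m := by
    have hsetu : {c : ConjClasses G | ∃ x ∈ S3, ConjClasses.mk x = c}
        = {c : ConjClasses G | ∃ x ∈ SH, ConjClasses.mk x = c}
          ∪ {c : ConjClasses G | ∃ x ∈ Sout, ConjClasses.mk x = c} := by
      ext c
      simp only [Set.mem_union, Set.mem_setOf_eq, hS3, hSH, hSout, Finset.mem_filter,
        Finset.mem_univ, true_and]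
      constructor
      · rintro ⟨x, hx, rfl⟩
        by_cases hxH : x ∈ H
        · exact Or.inl ⟨x, ⟨hxH, hx⟩, rfl⟩
        · exact Or.inr ⟨x, hxH, rfl⟩
      · rintro (⟨x, hx, rfl⟩ | ⟨x, hx, rfl⟩)
        · exact ⟨x, hx.2, rfl⟩
        · exact ⟨x, fun hc => hx (hsp_mem x hc), rfl⟩
    have hdisj : Disjoint {c : ConjClasses G | ∃ x ∈ SH, ConjClasses.mk x = c}
        {c : ConjClasses G | ∃ x ∈ Sout, ConjClasses.mk x = c} := by
      rw [Set.disjoint_left]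
      rintro c ⟨x, hx, rfl⟩ ⟨y, hy, hyc⟩
      rw [hSH, Finset.mem_filter] at hx
      rw [hSout, Finset.mem_filter] at hy
      obtain ⟨g, hg⟩ := isConj_iff.mp (ConjClasses.mk_eq_mk_iff_isConj.mp hyc)
      apply hy.2
      have h5 := hnorm g⁻¹ x hx.2.1
      rw [← hg] at h5
      rwa [show g⁻¹ * (g * y * g⁻¹) * g⁻¹⁻¹ = y by group] at h5
    have hcu : Nat.card ↥({c : ConjClasses G | ∃ x ∈ SH, ConjClasses.mk x = c}
          ∪ {c : ConjClasses G | ∃ x ∈ Sout, ConjClasses.mk x = c})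
        = Nat.card {c : ConjClasses G | ∃ x ∈ SH, ConjClasses.mk x = c}
          + Nat.card {c : ConjClasses G | ∃ x ∈ Sout, ConjClasses.mk x = c} := by
      rw [Nat.card_coe_set_eq, Nat.card_coe_set_eq, Nat.card_coe_set_eq,
        Set.ncard_union_eq hdisj (Set.toFinite _) (Set.toFinite _)]
    rw [hc3, hsetu, hcu, ← ha, ← hm]
  -- the subgroup side
  have EA := aux_kH (G := G) H
  have EB : ∑ x ∈ univ.filter (fun x : G => x ∈ H),
        (univ.filter fun y => y * x = x * y ∧ y ∈ H).card
      = ∑ x ∈ Ssp, (univ.filter fun y => y * x = x * y ∧ y ∈ H).card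
        + ∑ x ∈ SH, (univ.filter fun y => y * x = x * y ∧ y ∈ H).card := by
    rw [← Finset.sum_filter_add_sum_filter_not (univ.filter (fun x : G => x ∈ H)) sp]
    congr 1
    · congr 1
      rw [Finset.filter_filter, hSsp]
      apply Finset.filter_congr
      intro x _
      exact ⟨And.right, fun h => ⟨hsp_mem x h, h⟩⟩
    · congr 1
      rw [Finset.filter_filter, hSH]
  have EC : ∑ x ∈ Ssp, (univ.filter fun y => y * x = x * y ∧ y ∈ H).card = s * cardG := by
    rw [← E4]
    refine Finset.sum_congr rfl fun x hx => ?_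
    rw [hSsp, Finset.mem_filter] at hx
    exact aux_pe3b H x hx.2
  have ED : 2 * ∑ x ∈ SH, (univ.filter fun y => y * x = x * y ∧ y ∈ H).card = a * cardG := by
    rw [← E3, Finset.mul_sum]
    refine Finset.sum_congr rfl fun x hx => ?_
    rw [hSH, Finset.mem_filter] at hx
    have e1 := aux_pe1 H x
    have e2 := aux_pe2 H hidx x hx.2.2
    omega
  have hG2 : cardG = 2 * Nat.card ↥H := by
    rw [hcardG, ← Nat.card_eq_fintype_card, ← H.index_mul_card, hidx]
  have hnHpos : 0 < Nat.card ↥H := Nat.card_pos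
  have hkm : kH = a + 2 * s := by
    have h1 : kH * (2 * Nat.card ↥H) = (a + 2 * s) * (2 * Nat.card ↥H) := by
      calc kH * (2 * Nat.card ↥H) = 2 * (kH * Nat.card ↥H) := by ring
        _ = 2 * ∑ x ∈ univ.filter (fun x : G => x ∈ H),
              (univ.filter fun y => y * x = x * y ∧ y ∈ H).card := by rw [EA, ← hkH]
        _ = 2 * (∑ x ∈ Ssp, (univ.filter fun y => y * x = x * y ∧ y ∈ H).card
              + ∑ x ∈ SH, (univ.filter fun y => y * x = x * y ∧ y ∈ H).card) := by rw [EB]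
        _ = 2 * (s * cardG) + 2 * ∑ x ∈ SH,
              (univ.filter fun y => y * x = x * y ∧ y ∈ H).card := by rw [EC]; ring
        _ = 2 * (s * cardG) + a * cardG := by rw [ED]
        _ = (a + 2 * s) * cardG := by ring
        _ = (a + 2 * s) * (2 * Nat.card ↥H) := by rw [hG2]
    exact Nat.eq_of_mul_eq_mul_right (by positivity) h1
  -- final
  have hfin : {c : ConjClasses G | ∃ g : G, ConjClasses.mk g = c ∧ g ∉ H}
      = {c : ConjClasses G | ∃ x ∈ Sout, ConjClasses.mk x = c} := by
    ext c
    simp only [Set.mem_setOf_eq, hSout, Finset.mem_filter, Finset.mem_univ, true_and]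
    constructor
    · rintro ⟨g, h1, h2⟩; exact ⟨g, h2, h1⟩
    · rintro ⟨g, h1, h2⟩; exact ⟨g, h2, h1⟩
  rw [hfin, ← hm]
  show kH % 2 = m % 2
  omega
end

section
/- Let G be a finite group and H a subgroup of index 2 in G. If no element of G \ H is real in G (i.e., no element of G \ H is conjugate in G to its inverse), then the number of conjugacy classes of H is even. -/
open MulAction

lemma even_nat_card_of_involutive {α : Type*} [Finite α] (f : α → α)
    (hf : Function.Involutive f) (h : ∀ a, f a ≠ a) : Even (Nat.card α) := by
  rcases isEmpty_or_nonempty α with he | ⟨⟨a0⟩⟩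
  · simp [Nat.card_of_isEmpty]
  · set σ : Equiv.Perm α := hf.toPerm f
    have hσ2 : σ ^ 2 = 1 := by
      ext x; simp [σ, pow_succ, Function.Involutive.toPerm, hf x]
    have hσne : σ ≠ 1 := by
      intro hc
      exact h a0 (congrFun (congrArg DFunLike.coe hc) a0)
    have horder : orderOf σ = 2 := by
      have := orderOf_eq_prime (p := 2) (by simpa [sq] using hσ2) hσne
      simpa using this
    set K : Subgroup (Equiv.Perm α) := Subgroup.zpowers σ
    have hK : IsPGroup 2 K := IsPGroup.of_card (n := 1) (by simp [K, Nat.card_zpowers, horder])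
    have hfix : IsEmpty (fixedPoints K α) := by
      constructor
      rintro ⟨x, hx⟩
      have := hx (⟨σ, Subgroup.mem_zpowers σ⟩ : K)
      exact h x (by simpa [σ, Function.Involutive.toPerm] using this)
    have hm := hK.card_modEq_card_fixedPoints α
    have h0 : Nat.card (fixedPoints K α) = 0 := @Nat.card_of_isEmpty _ hfix
    rw [h0] at hm
    exact Nat.even_iff.2 hm

lemma sum_card_pairs {α β : Type*} [Fintype α] [Fintype β] (r : α → β → Prop)
    [∀ a b, Decidable (r a b)] :
    ∑ a : α, Fintype.card {b // r a b} = ∑ b : β, Fintype.card {a // r a b} := by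
  simp only [Fintype.card_subtype, Finset.card_filter]
  exact Finset.sum_comm

def fixedBySubEquiv {A M : Type*} [Group A] [MulAction A M] (p : SubMulAction A M) (a : A) :
    (MulAction.fixedBy (↥p) a) ≃ {x : M // x ∈ p ∧ a • x = x} where
  toFun q := ⟨q.1.1, q.1.2, (SubMulAction.val_smul a q.1).symm.trans (congrArg Subtype.val q.2)⟩
  invFun x := ⟨⟨x.1, x.2.1⟩, Subtype.ext ((SubMulAction.val_smul a _).trans x.2.2)⟩
  left_inv q := by apply Subtype.ext; apply Subtype.ext; rfl
  right_inv x := rfl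

/-- Let `G` be a finite group and `H` a subgroup of index 2 in `G`. If no
element of `G \ H` is real in `G` (conjugate in `G` to its inverse), then the number of
conjugacy classes of `H` is even. -/
theorem even_card_conjClasses_of_no_real_in_complement
    (G : Type*) [Group G] [Finite G] (H : Subgroup G) (hidx : H.index = 2)
    (hreal : ∀ g : G, g ∉ H → ¬ IsConj g g⁻¹) :
    Even (Nat.card (ConjClasses H)) := by
  classical
  letI : Fintype G := Fintype.ofFinite G
  have hnormal : H.Normal := by
    constructor
    intro h hh g
    have h1 : (g * h) * g⁻¹ ∈ H ↔ ((g * h ∈ H) ↔ (g⁻¹ ∈ H)) :=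
      Subgroup.mul_mem_iff_of_index_two hidx
    rw [h1, Subgroup.mul_mem_iff_of_index_two hidx, inv_mem_iff (x := g)]
    tauto
  letI : Finite (ConjAct G) := Finite.of_equiv G (ConjAct.toConjAct (G := G)).toEquiv
  letI : Fintype (ConjAct G) := Fintype.ofFinite _
  set φ : G ≃* ConjAct G := ConjAct.toConjAct with hφ
  set K : Subgroup (ConjAct G) := H.map φ.toMonoidHom with hKdef
  have hKmem : ∀ k : ↥K, ConjAct.ofConjAct (↑k : ConjAct G) ∈ H := by
    rintro ⟨k, hk⟩
    obtain ⟨h, hh, rfl⟩ := hk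
    exact hh
  have hsmul : ∀ (k : ↥K) (x : G),
      (k : ConjAct G) • x
        = (ConjAct.ofConjAct (↑k : ConjAct G)) * x * (ConjAct.ofConjAct (↑k : ConjAct G))⁻¹ :=
    fun k x => ConjAct.smul_def _ _
  -- the three invariant sets
  have conj_mem_iff : ∀ (m x : G), m ∈ H → ((m * x * m⁻¹ ∈ H) ↔ x ∈ H) := by
    intro m x hm
    constructor
    · intro hx
      have := hnormal.conj_mem _ hx m⁻¹
      simpa [mul_assoc] using this
    · intro hx
      exact hnormal.conj_mem _ hx m
  set sH : SubMulAction (↥K) G :=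
    { carrier := {g : G | g ∈ H}
      smul_mem' := by
        intro k x hx
        have h1 : k • x = (k : ConjAct G) • x := rfl
        rw [Set.mem_setOf_eq] at hx ⊢
        rw [h1, hsmul k x]
        exact (conj_mem_iff _ _ (hKmem k)).2 hx } with hsHdef
  set sS : SubMulAction (↥K) G :=
    { carrier := {g : G | g ∉ H}
      smul_mem' := by
        intro k x hx
        have h1 : k • x = (k : ConjAct G) • x := rfl
        rw [Set.mem_setOf_eq] at hx ⊢
        rw [h1, hsmul k x]
        exact fun hc => hx ((conj_mem_iff _ _ (hKmem k)).1 hc) } with hsSdef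
  set sX : SubMulAction (ConjAct G) G :=
    { carrier := {g : G | ∀ x : G, g * x = x * g → x ∈ H}
      smul_mem' := by
        intro u g hg
        rw [Set.mem_setOf_eq] at hg ⊢
        set m : G := ConjAct.ofConjAct u with hm
        have h1 : u • g = m * g * m⁻¹ := ConjAct.smul_def _ _
        rw [h1]
        intro x hx
        have h2 : g * (m⁻¹ * x * m) = (m⁻¹ * x * m) * g := by
          have := congrArg (fun z => m⁻¹ * z * m) hx
          simpa [mul_assoc] using this
        have h3 : m⁻¹ * x * m ∈ H := hg _ h2
        have := hnormal.conj_mem _ h3 m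
        simpa [mul_assoc] using this } with hsXdef
  -- counting functions
  set cH : G → ℕ := fun g => Fintype.card {x : G // x ∈ H ∧ g * x = x * g} with hcH
  set cS : G → ℕ := fun g => Fintype.card {x : G // x ∉ H ∧ g * x = x * g} with hcS
  set cA : G → ℕ := fun g => Fintype.card {x : G // g * x = x * g} with hcA
  letI : ∀ k : ↥K, Fintype (fixedBy (↥sH) k) := fun _ => Fintype.ofFinite _
  letI : ∀ k : ↥K, Fintype (fixedBy (↥sS) k) := fun _ => Fintype.ofFinite _
  letI : ∀ u : ConjAct G, Fintype (fixedBy (↥sX) u) := fun _ => Fintype.ofFinite _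
  letI : Fintype (Quotient (orbitRel (↥K) (↥sH))) := Fintype.ofFinite _
  letI : Fintype (Quotient (orbitRel (↥K) (↥sS))) := Fintype.ofFinite _
  letI : Fintype (Quotient (orbitRel (ConjAct G) (↥sX))) := Fintype.ofFinite _
  have key : ∀ (k : ↥K) (y : G), (k • y = y) ↔
      ((ConjAct.ofConjAct (↑k : ConjAct G)) * y = y * (ConjAct.ofConjAct (↑k : ConjAct G))) := by
    intro k y
    rw [Subgroup.smul_def, hsmul k y, mul_inv_eq_iff_eq_mul]
  have hfixH : ∀ k : ↥K, Fintype.card (fixedBy (↥sH) k)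
      = cH (ConjAct.ofConjAct (↑k : ConjAct G)) := by
    intro k
    refine Fintype.card_congr ((fixedBySubEquiv sH k).trans (Equiv.subtypeEquivRight ?_))
    intro x
    rw [key k x]
    exact Iff.rfl
  have hfixS : ∀ k : ↥K, Fintype.card (fixedBy (↥sS) k)
      = cS (ConjAct.ofConjAct (↑k : ConjAct G)) := by
    intro k
    refine Fintype.card_congr ((fixedBySubEquiv sS k).trans (Equiv.subtypeEquivRight ?_))
    intro x
    rw [key k x]
    exact Iff.rfl
  have key2 : ∀ (u : ConjAct G) (y : G), (u • y = y) ↔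
      ((ConjAct.ofConjAct u) * y = y * (ConjAct.ofConjAct u)) := by
    intro u y
    rw [ConjAct.smul_def, mul_inv_eq_iff_eq_mul]
  have hfixX : ∀ u : ConjAct G, Fintype.card (fixedBy (↥sX) u)
      = Fintype.card {x : G // x ∈ sX ∧ (ConjAct.ofConjAct u) * x = x * (ConjAct.ofConjAct u)} := by
    intro u
    refine Fintype.card_congr ((fixedBySubEquiv sX u).trans (Equiv.subtypeEquivRight ?_))
    intro x
    rw [key2 u x]
  -- Burnside applications
  have hB1 := MulAction.sum_card_fixedBy_eq_card_orbits_mul_card_group (↥K) (↥sH)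
  have hB2 := MulAction.sum_card_fixedBy_eq_card_orbits_mul_card_group (↥K) (↥sS)
  have hB3 := MulAction.sum_card_fixedBy_eq_card_orbits_mul_card_group (ConjAct G) (↥sX)
  set eHK : ↥H ≃ ↥K := (Subgroup.equivMapOfInjective H φ.toMonoidHom (φ.injective)).toEquiv
    with heHKdef
  have heHK : ∀ h : ↥H, ConjAct.ofConjAct (↑(eHK h) : ConjAct G) = (↑h : G) := fun _ => rfl
  have hsum1 : ∑ k : ↥K, cH (ConjAct.ofConjAct (↑k : ConjAct G)) = ∑ h : ↥H, cH ↑h :=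
    (Fintype.sum_equiv eHK _ _ (fun h => by rw [heHK])).symm
  have hsum2 : ∑ k : ↥K, cS (ConjAct.ofConjAct (↑k : ConjAct G)) = ∑ h : ↥H, cS ↑h :=
    (Fintype.sum_equiv eHK _ _ (fun h => by rw [heHK])).symm
  have hcardK : Fintype.card ↥K = Fintype.card ↥H := (Fintype.card_congr eHK).symm
  -- orbits of K on sH are conjugacy classes of H
  have hΩH : Fintype.card (Quotient (orbitRel (↥K) (↥sH))) = Nat.card (ConjClasses ↥H) := by
    rw [← Nat.card_eq_fintype_card]
    apply Nat.card_congr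
    refine Quotient.congr (Equiv.subtypeEquivRight (q := fun x => x ∈ H) (fun x => Iff.rfl)) ?_
    intro a b
    constructor
    · intro hab
      obtain ⟨k, hk⟩ := MulAction.mem_orbit_iff.1 hab
      have hk' : ConjAct.ofConjAct (↑k : ConjAct G) * (↑b : G)
          * (ConjAct.ofConjAct (↑k : ConjAct G))⁻¹ = (↑a : G) := by
        have := congrArg (Subtype.val) hk
        rw [SubMulAction.val_smul] at this
        rw [← this, Subgroup.smul_def, ConjAct.smul_def]
      set m : G := ConjAct.ofConjAct (↑k : ConjAct G) with hm
      refine isConj_iff.2 ⟨⟨m⁻¹, inv_mem (hKmem k)⟩, ?_⟩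
      apply Subtype.ext
      push_cast
      show m⁻¹ * (↑a : G) * m⁻¹⁻¹ = (↑b : G)
      rw [← hk']
      group
    · intro hab
      obtain ⟨c, hc⟩ := isConj_iff.1 hab
      have hc' : (↑c : G) * (↑a : G) * (↑c : G)⁻¹ = (↑b : G) := by
        have := congrArg (Subtype.val) hc
        push_cast at this
        exact this
      apply MulAction.mem_orbit_iff.2
      refine ⟨⟨φ ((↑c : G)⁻¹), Subgroup.mem_map.2 ⟨(↑c : G)⁻¹, inv_mem c.2, rfl⟩⟩, ?_⟩
      apply Subtype.ext
      rw [SubMulAction.val_smul, Subgroup.smul_def, ConjAct.smul_def]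
      show ConjAct.ofConjAct (ConjAct.toConjAct ((↑c : G)⁻¹)) * (↑b : G)
        * (ConjAct.ofConjAct (ConjAct.toConjAct ((↑c:G)⁻¹)))⁻¹ = (↑a : G)
      rw [ConjAct.ofConjAct_toConjAct, ← hc']
      group
  -- orbits of K on sS : even count
  have hinvmem : ∀ x : ↥sS, (↑x : G)⁻¹ ∈ sS := by
    intro x
    have hx : (↑x : G) ∉ H := x.2
    exact fun hc => hx ((inv_mem_iff (x := (↑x : G))).1 hc)
  have hresp : ∀ (a b : ↥sS), (orbitRel (↥K) (↥sS)) a b →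
      (orbitRel (↥K) (↥sS)) ⟨(↑a : G)⁻¹, hinvmem a⟩ ⟨(↑b : G)⁻¹, hinvmem b⟩ := by
    intro a b hab
    rw [MulAction.orbitRel_apply] at hab ⊢
    obtain ⟨k, hk⟩ := MulAction.mem_orbit_iff.1 hab
    refine MulAction.mem_orbit_iff.2 ⟨k, ?_⟩
    have hk' := congrArg Subtype.val hk
    rw [SubMulAction.val_smul, Subgroup.smul_def, ConjAct.smul_def] at hk'
    apply Subtype.ext
    rw [SubMulAction.val_smul, Subgroup.smul_def, ConjAct.smul_def]
    show ConjAct.ofConjAct (↑k : ConjAct G) * (↑b : G)⁻¹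
      * (ConjAct.ofConjAct (↑k : ConjAct G))⁻¹ = (↑a : G)⁻¹
    rw [← hk']
    group
  have hEvenS : Even (Fintype.card (Quotient (orbitRel (↥K) (↥sS)))) := by
    rw [← Nat.card_eq_fintype_card]
    refine even_nat_card_of_involutive
      (Quotient.map' (fun x : ↥sS => (⟨(↑x : G)⁻¹, hinvmem x⟩ : ↥sS)) hresp) ?_ ?_
    · intro q
      induction q using Quotient.ind' with
      | _ x =>
        rw [Quotient.map'_mk'', Quotient.map'_mk'']
        congr 1
        apply Subtype.ext
        simp
    · intro q hq
      induction q using Quotient.ind' with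
      | _ x =>
        rw [Quotient.map'_mk''] at hq
        have := Quotient.exact' hq
        rw [MulAction.orbitRel_apply] at this
        obtain ⟨k, hk⟩ := MulAction.mem_orbit_iff.1 this
        have hk' := congrArg Subtype.val hk
        rw [SubMulAction.val_smul, Subgroup.smul_def, ConjAct.smul_def] at hk'
        refine hreal (↑x : G) x.2 (isConj_iff.2 ⟨ConjAct.ofConjAct (↑k : ConjAct G), hk'⟩)
  -- pointwise counting identity
  have hpoint : ∀ g : G, cH g = cS g + (if (∀ x : G, g * x = x * g → x ∈ H) then cA g else 0) := by
    intro g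
    by_cases hg : ∀ x : G, g * x = x * g → x ∈ H
    · rw [if_pos hg]
      have h0 : cS g = 0 := by
        simp only [hcS]
        rw [Fintype.card_eq_zero_iff]
        constructor
        rintro ⟨x, hx1, hx2⟩
        exact hx1 (hg x hx2)
      have h1 : cH g = cA g := by
        simp only [hcH, hcA]
        exact Fintype.card_congr
          (Equiv.subtypeEquivRight (fun x => ⟨fun h => h.2, fun h => ⟨hg x h, h⟩⟩))
      rw [h1, h0, Nat.zero_add]
    · rw [if_neg hg, Nat.add_zero]
      push_neg at hg
      obtain ⟨c0, hc0comm, hc0H⟩ := hg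
      simp only [hcH, hcS]
      apply Fintype.card_congr
      have hmem1 : ∀ x : G, x ∈ H → c0 * x ∉ H := by
        intro x hx hc
        rw [Subgroup.mul_mem_iff_of_index_two hidx] at hc
        exact hc0H (hc.2 hx)
      have hmem2 : ∀ y : G, y ∉ H → c0⁻¹ * y ∈ H := by
        intro y hy
        rw [Subgroup.mul_mem_iff_of_index_two hidx]
        constructor
        · intro hc; exact absurd ((inv_mem_iff (x := c0)).1 hc) hc0H
        · intro hc; exact absurd hc hy
      have hcomm1 : ∀ x : G, g * x = x * g → g * (c0 * x) = (c0 * x) * g := by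
        intro x hx
        rw [← mul_assoc, hc0comm, mul_assoc, hx, ← mul_assoc]
      have hc0inv : g * c0⁻¹ = c0⁻¹ * g := (Commute.inv_right hc0comm).eq
      have hcomm2 : ∀ x : G, g * x = x * g → g * (c0⁻¹ * x) = (c0⁻¹ * x) * g := by
        intro x hx
        rw [← mul_assoc, hc0inv, mul_assoc, hx, ← mul_assoc]
      refine ⟨fun x => ⟨c0 * ↑x, hmem1 _ x.2.1, hcomm1 _ x.2.2⟩,
        fun y => ⟨c0⁻¹ * ↑y, hmem2 _ y.2.1, hcomm2 _ y.2.2⟩, ?_, ?_⟩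
      · intro x; apply Subtype.ext; show c0⁻¹ * (c0 * ↑x) = ↑x
        rw [← mul_assoc, inv_mul_cancel, one_mul]
      · intro y; apply Subtype.ext; show c0 * (c0⁻¹ * ↑y) = ↑y
        rw [← mul_assoc, mul_inv_cancel, one_mul]
  have hsum4 : ∑ h : ↥H, cH ↑h = (∑ h : ↥H, cS ↑h)
      + ∑ h : ↥H, (if (∀ x : G, (↑h : G) * x = x * (↑h : G) → x ∈ H) then cA ↑h else 0) := by
    rw [← Finset.sum_add_distrib]
    apply Finset.sum_congr rfl
    intro h _
    exact hpoint ↑h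
  -- ite-sum equals sum over sX
  have hsum5 : (∑ h : ↥H, (if (∀ x : G, (↑h : G) * x = x * (↑h : G) → x ∈ H) then cA ↑h else 0))
      = ∑ x : ↥sX, cA ↑x := by
    have e1 : (∑ g ∈ Finset.univ.filter (fun g : G => g ∈ H),
        (if (∀ x : G, g * x = x * g → x ∈ H) then cA g else 0))
        = ∑ h : ↥H, (if (∀ x : G, (↑h : G) * x = x * (↑h : G) → x ∈ H) then cA ↑h else 0) :=
      Finset.sum_subtype _ (by simp) _
    have e2 : (∑ g ∈ Finset.univ.filter (fun g : G => g ∈ sX), cA g) = ∑ x : ↥sX, cA ↑x :=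
      Finset.sum_subtype _ (by simp) _
    rw [← e1, ← e2, ← Finset.sum_filter, Finset.filter_filter]
    apply Finset.sum_congr _ (fun _ _ => rfl)
    apply Finset.filter_congr
    intro g _
    constructor
    · rintro ⟨-, hp⟩
      exact hp
    · intro hp
      exact ⟨hp g rfl, hp⟩
  -- double counting
  have hdc : (∑ u : ConjAct G, Fintype.card (fixedBy (↥sX) u)) = ∑ x : ↥sX, cA ↑x := by
    have step1 : ∀ u : ConjAct G, Fintype.card (fixedBy (↥sX) u)
        = Fintype.card {x : ↥sX // ConjAct.ofConjAct u * ↑x = ↑x * ConjAct.ofConjAct u} := by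
      intro u
      rw [hfixX u]
      apply Fintype.card_congr
      exact (Equiv.subtypeSubtypeEquivSubtypeInter (fun x : G => x ∈ sX)
        (fun x : G => ConjAct.ofConjAct u * x = x * ConjAct.ofConjAct u)).symm
    have step3 : ∀ x : ↥sX,
        Fintype.card {u : ConjAct G // ConjAct.ofConjAct u * ↑x = ↑x * ConjAct.ofConjAct u}
        = cA ↑x := by
      intro x
      simp only [hcA]
      apply Fintype.card_congr
      refine Equiv.subtypeEquiv (φ.toEquiv.symm) ?_
      intro u
      exact ⟨Eq.symm, Eq.symm⟩
    calc (∑ u : ConjAct G, Fintype.card (fixedBy (↥sX) u))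
        = ∑ u : ConjAct G,
            Fintype.card {x : ↥sX // ConjAct.ofConjAct u * ↑x = ↑x * ConjAct.ofConjAct u} := by
          exact Finset.sum_congr rfl (fun u _ => step1 u)
      _ = ∑ x : ↥sX,
            Fintype.card {u : ConjAct G // ConjAct.ofConjAct u * ↑x = ↑x * ConjAct.ofConjAct u} :=
          sum_card_pairs _
      _ = ∑ x : ↥sX, cA ↑x := Finset.sum_congr rfl (fun x _ => step3 x)
  -- final arithmetic
  have hcardG : Fintype.card G = 2 * Fintype.card ↥H := by
    have := Subgroup.card_mul_index H
    rw [hidx] at this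
    rw [← Nat.card_eq_fintype_card, ← Nat.card_eq_fintype_card, ← this, Nat.mul_comm]
  have EH : ∑ h : ↥H, cH ↑h = Nat.card (ConjClasses ↥H) * Fintype.card ↥H := by
    rw [← hsum1, ← hΩH, ← hcardK, ← hB1]
    exact Finset.sum_congr rfl (fun u _ => (hfixH u).symm)
  have ES : ∑ h : ↥H, cS ↑h
      = Fintype.card (Quotient (orbitRel (↥K) (↥sS))) * Fintype.card ↥H := by
    rw [← hsum2, ← hcardK, ← hB2]
    exact Finset.sum_congr rfl (fun u _ => (hfixS u).symm)
  have EX : ∑ x : ↥sX, cA ↑x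
      = Fintype.card (Quotient (orbitRel (ConjAct G) (↥sX))) * (2 * Fintype.card ↥H) := by
    rw [← hcardG, ← hdc, hB3]
    congr 1
  set k := Nat.card (ConjClasses ↥H) with hk
  set n := Fintype.card ↥H with hn
  set b := Fintype.card (Quotient (orbitRel (↥K) (↥sS))) with hb
  set m := Fintype.card (Quotient (orbitRel (ConjAct G) (↥sX))) with hmm
  have hmain : k * n = (b + 2 * m) * n := by
    rw [EH] at hsum4
    rw [ES, hsum5, EX] at hsum4
    rw [hsum4]
    ring
  have hnpos : 0 < n := Fintype.card_pos
  have hkbm : k = b + 2 * m := Nat.eq_of_mul_eq_mul_right hnpos hmain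
  rw [hkbm]
  exact hEvenS.add (even_two_mul m)
end

section
/- Let P be a profinite group and g ∈ P. If for every open normal subgroup N of P the coset gN is conjugate to its inverse g⁻¹N in P/N, then g is conjugate to g⁻¹ in P. -/
/-- Let `P` be a profinite group and `g ∈ P`. If for every open normal
subgroup `N` of `P` the coset `gN` is conjugate to its inverse in `P/N`, then `g` is
conjugate to `g⁻¹` in `P`. -/
theorem isConj_inv_of_forall_quotient
    (P : Type*) [Group P] [TopologicalSpace P] [IsTopologicalGroup P]
    [CompactSpace P] [T2Space P] [TotallyDisconnectedSpace P] (g : P)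
    (h : ∀ (N : Subgroup P) [N.Normal], IsOpen (N : Set P) →
      IsConj (QuotientGroup.mk g : P ⧸ N) (QuotientGroup.mk g : P ⧸ N)⁻¹) :
    IsConj g g⁻¹ := by
  -- the family of closed sets
  let K : OpenNormalSubgroup P → Set P := fun N => {x | x * g * x⁻¹ * g ∈ N.toSubgroup}
  have hcont : Continuous (fun x : P => x * g * x⁻¹ * g) := by continuity
  have hKclosed : ∀ N, IsClosed (K N) := fun N =>
    IsClosed.preimage hcont (OpenSubgroup.isClosed N.toOpenSubgroup)
  have hKne : ∀ N, (K N).Nonempty := by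
    intro N
    have hN : N.toSubgroup.Normal := N.isNormal'
    obtain ⟨c, hc⟩ := isConj_iff.mp (h N.toSubgroup N.isOpen')
    obtain ⟨x, rfl⟩ := QuotientGroup.mk_surjective (s := N.toSubgroup) c
    refine ⟨x, ?_⟩
    have : (QuotientGroup.mk (x * g * x⁻¹ * g) : P ⧸ N.toSubgroup) = 1 := by
      have := hc
      rw [show x * g * x⁻¹ * g = (x * g * x⁻¹) * (g⁻¹)⁻¹ by group]
      simp only [QuotientGroup.mk_mul, QuotientGroup.mk_inv] at this ⊢
      rw [this]
      group
    exact (QuotientGroup.eq_one_iff _).mp this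
  have hdir : Directed (· ⊇ ·) K := by
    intro N M
    refine ⟨N ⊓ M, ?_, ?_⟩ <;> intro x hx <;>
      [exact hx.1; exact hx.2]
  haveI : Nonempty (OpenNormalSubgroup P) := ⟨⟨⟨⊤, isOpen_univ⟩, inferInstance⟩⟩
  obtain ⟨x, hx⟩ := IsCompact.nonempty_iInter_of_directed_nonempty_isCompact_isClosed
    K hdir hKne (fun N => (hKclosed N).isCompact) hKclosed
  have hx1 : x * g * x⁻¹ * g = 1 := by
    by_contra hne
    obtain ⟨W, hW, h1W, hzW⟩ := exists_isClopen_of_totally_separated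
      (Ne.symm hne : (1 : P) ≠ x * g * x⁻¹ * g)
    obtain ⟨H, hH⟩ := IsTopologicalGroup.exist_openNormalSubgroup_sub_clopen_nhds_of_one hW h1W
    have : x ∈ K H := Set.mem_iInter.mp hx H
    exact hzW (hH this)
  rw [isConj_iff]
  refine ⟨x, ?_⟩
  have : x * g * x⁻¹ = (x * g * x⁻¹ * g) * g⁻¹ := by group
  rw [this, hx1, one_mul]
end

section
/- Let P be a pro-2 group of finite rank, N a normal open uniform subgroup of P, and φ a continuous automorphism of P of order 2 with φ(N) = N. Then for all integers s > t ≥ 2 and for every n ∈ N_t such that φ(n)N_s = n⁻¹N_s, there exists m ∈ N_{t-1} such that nN_{s-1} = φ(m⁻¹)m N_{s-1}. -/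
/-- The set of real conjugacy classes of a group `G`: conjugacy classes containing an
element which is conjugate to its inverse (equivalently, consisting of real elements). -/
def realConjClassSet (G : Type*) [Group G] : Set (ConjClasses G) :=
  {c | ∃ g : G, ConjClasses.mk g = c ∧ IsConj g g⁻¹}

open CategoryTheory in
/-- The set of real-valued irreducible complex characters of a group `G`, regarded as
functions `G → ℂ`: characters of simple finite-dimensional complex representations of `G`
all of whose values are real (fixed by complex conjugation). -/
def realIrrChars (G : Type) [Group G] : Set (G → ℂ) :=
  {χ | (∃ V : FDRep ℂ G, Simple V ∧ ∀ g, χ g = V.character g) ∧ ∀ g, star (χ g) = χ g}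

/-- The real irreducible characters of `P/N`, pulled back to functions on `P`. -/
def quotRealIrrChars {P : Type} [Group P] (N : Subgroup P) [N.Normal] : Set (P → ℂ) :=
  {χ | ∃ χ' ∈ realIrrChars (P ⧸ N), ∀ g : P, χ g = χ' (QuotientGroup.mk g)}

/-- The set of real-valued irreducible continuous complex characters of a topological
group `P`: the union, over all open normal subgroups `N` of `P`, of the real irreducible
characters of the (finite, when `P` is profinite) quotients `P/N`, regarded as functions
`P → ℂ`. -/
def realContIrrChars (P : Type) [Group P] [TopologicalSpace P] : Set (P → ℂ) :=
  {χ | ∃ (N : Subgroup P) (hN : N.Normal), IsOpen (N : Set P) ∧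
    χ ∈ @quotRealIrrChars P _ N hN}

/-- A topological group is pro-2 if all of its quotients by open normal subgroups
are 2-groups. -/
def IsProTwo (P : Type) [Group P] [TopologicalSpace P] : Prop :=
  ∀ (N : Subgroup P) [N.Normal], IsOpen (N : Set P) → IsPGroup 2 (P ⧸ N)

/-- A topological group has finite rank if there is `r` such that every closed subgroup
can be topologically generated by at most `r` elements. -/
def HasFiniteRank (P : Type) [Group P] [TopologicalSpace P] [IsTopologicalGroup P] : Prop :=
  ∃ r : ℕ, ∀ H : Subgroup P, IsClosed (H : Set P) →
    ∃ S : Finset P, (S : Set P) ⊆ H ∧ S.card ≤ r ∧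
      H ≤ (Subgroup.closure (S : Set P)).topologicalClosure

/-- For a subgroup `N` of a topological group, the series defined (with a shift of index:
`seriesN N k` is `N_{k+1}` of the paper) by `N_1 = N` and `N_{k+1}` the closed subgroup
generated by `[N_k, N]` and the squares of elements of `N_k`. -/
def seriesN {P : Type} [Group P] [TopologicalSpace P] [IsTopologicalGroup P]
    (N : Subgroup P) : ℕ → Subgroup P
  | 0 => N
  | k + 1 =>
      (⁅seriesN N k, N⁆ ⊔
        Subgroup.closure {y : P | ∃ x ∈ seriesN N k, y = x ^ 2}).topologicalClosure

/-- A subgroup `N` of a pro-2 group is uniform if it is topologically finitely generated,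
torsion-free, and its closed commutator subgroup is contained in the closed subgroup
generated by fourth powers. -/
def IsUniform2 {P : Type} [Group P] [TopologicalSpace P] [IsTopologicalGroup P]
    (N : Subgroup P) : Prop :=
  (∃ S : Finset P, (S : Set P) ⊆ N ∧ N ≤ (Subgroup.closure (S : Set P)).topologicalClosure) ∧
  (∀ g ∈ N, IsOfFinOrder g → g = 1) ∧
  (⁅N, N⁆ : Subgroup P).topologicalClosure ≤
    (Subgroup.closure {y : P | ∃ x ∈ N, y = x ^ 4}).topologicalClosure


set_option linter.unusedSectionVars false

open scoped commutatorElement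

namespace Descent14

variable {P : Type} [Group P] [TopologicalSpace P] [IsTopologicalGroup P]

lemma closure_normal_of_conjInv {G : Type*} [Group G] {s : Set G}
    (h : ∀ g : G, ∀ x ∈ s, g * x * g⁻¹ ∈ s) :
    (Subgroup.closure s).Normal := by
  constructor
  intro n hn g
  have hmap : (Subgroup.closure s).map (MulAut.conj g).toMonoidHom ≤ Subgroup.closure s := by
    rw [MonoidHom.map_closure]
    apply Subgroup.closure_mono
    rintro y ⟨x, hx, rfl⟩
    exact h g x hx
  exact hmap ⟨n, hn, rfl⟩

section Series

variable (N : Subgroup P) (hNnorm : N.Normal) (hNopen : IsOpen (N : Set P))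
include hNnorm hNopen

lemma seriesN_succ (k : ℕ) :
    seriesN N (k+1) = (⁅seriesN N k, N⁆ ⊔
      Subgroup.closure {y : P | ∃ x ∈ seriesN N k, y = x ^ 2}).topologicalClosure := rfl

lemma seriesN_isClosed (k : ℕ) : IsClosed ((seriesN N k : Subgroup P) : Set P) := by
  cases k with
  | zero => exact N.isClosed_of_isOpen hNopen
  | succ k => exact Subgroup.isClosed_topologicalClosure _

lemma seriesN_normal (k : ℕ) : (seriesN N k).Normal := by
  induction k with
  | zero => exact hNnorm
  | succ k h1 =>
      haveI := h1
      haveI := hNnorm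
      haveI h2 : (⁅seriesN N k, N⁆ : Subgroup P).Normal := Subgroup.commutator_normal _ _
      haveI h3 : (Subgroup.closure {y : P | ∃ x ∈ seriesN N k, y = x ^ 2}).Normal := by
        apply closure_normal_of_conjInv
        rintro g y ⟨x, hx, rfl⟩
        exact ⟨g * x * g⁻¹, h1.conj_mem x hx g, (conj_pow ..).symm⟩
      haveI h4 : (⁅seriesN N k, N⁆ ⊔
          Subgroup.closure {y : P | ∃ x ∈ seriesN N k, y = x ^ 2}).Normal :=
        Subgroup.sup_normal _ _
      exact Subgroup.is_normal_topologicalClosure _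

lemma sq_mem_seriesN {k : ℕ} {x : P} (hx : x ∈ seriesN N k) : x ^ 2 ∈ seriesN N (k+1) := by
  have h1 : x ^ 2 ∈ Subgroup.closure {y : P | ∃ x ∈ seriesN N k, y = x ^ 2} :=
    Subgroup.subset_closure ⟨x, hx, rfl⟩
  have h2 : Subgroup.closure {y : P | ∃ x ∈ seriesN N k, y = x ^ 2} ≤ seriesN N (k+1) :=
    le_sup_right.trans (Subgroup.le_topologicalClosure _)
  exact h2 h1

lemma comm_raw_le (k : ℕ) : ⁅seriesN N k, N⁆ ≤ seriesN N (k+1) :=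
  le_sup_left.trans (Subgroup.le_topologicalClosure _)

lemma comm_raw_mem {k : ℕ} {x u : P} (hx : x ∈ seriesN N k) (hu : u ∈ N) :
    ⁅x, u⁆ ∈ seriesN N (k+1) :=
  comm_raw_le N hNnorm hNopen k (Subgroup.commutator_mem_commutator hx hu)

lemma seriesN_succ_le (k : ℕ) : seriesN N (k+1) ≤ seriesN N k := by
  apply Subgroup.topologicalClosure_minimal _ _ (seriesN_isClosed N hNnorm hNopen k)
  apply sup_le
  · rw [Subgroup.commutator_le]
    intro x hx u hu
    have h : ⁅x, u⁆ = x * (u * x⁻¹ * u⁻¹) := by group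
    rw [h]
    refine Subgroup.mul_mem _ hx ?_
    have := (seriesN_normal N hNnorm hNopen k).conj_mem x⁻¹ (Subgroup.inv_mem _ hx) u
    simpa using this
  · rw [Subgroup.closure_le]
    rintro y ⟨x, hx, rfl⟩
    exact Subgroup.pow_mem _ hx 2

lemma seriesN_antitone {j k : ℕ} (h : j ≤ k) : seriesN N k ≤ seriesN N j := by
  induction k with
  | zero => simp [Nat.le_zero.mp h]
  | succ k ih =>
      rcases Nat.lt_or_ge j (k+1) with h' | h'
      · exact (seriesN_succ_le N hNnorm hNopen k).trans (ih (Nat.lt_succ_iff.mp h'))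
      · have : j = k + 1 := le_antisymm h h'
        simp [this]

lemma seriesN_le_N (k : ℕ) : seriesN N k ≤ N := seriesN_antitone N hNnorm hNopen (Nat.zero_le k)

end Series

end Descent14

namespace Descent14

variable {P : Type} [Group P] [TopologicalSpace P] [IsTopologicalGroup P]

/-- The subgroup of elements whose commutators with everything in `B` lie in `L`. -/
def relCent (B L : Subgroup P) (hL : L.Normal) : Subgroup P where
  carrier := {h : P | ∀ b ∈ B, ⁅h, b⁆ ∈ L}
  one_mem' := by intro b hb; simpa using L.one_mem
  mul_mem' := by
    intro g h hg hh b hb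
    have key : ⁅g*h, b⁆ = (g * ⁅h,b⁆ * g⁻¹) * ⁅g,b⁆ := by
      simp only [commutatorElement_def]; group
    rw [key]
    exact L.mul_mem (hL.conj_mem _ (hh b hb) g) (hg b hb)
  inv_mem' := by
    intro g hg b hb
    have key : ⁅g⁻¹, b⁆ = g⁻¹ * ⁅g,b⁆⁻¹ * g := by
      simp only [commutatorElement_def]; group
    rw [key]
    have := hL.conj_mem _ (L.inv_mem (hg b hb)) g⁻¹
    simpa using this

lemma mem_relCent {B L : Subgroup P} {hL : L.Normal} {h : P} :
    h ∈ relCent B L hL ↔ ∀ b ∈ B, ⁅h, b⁆ ∈ L := Iff.rfl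

lemma relCent_isClosed (B L : Subgroup P) (hL : L.Normal) (hLc : IsClosed (L : Set P)) :
    IsClosed ((relCent B L hL : Subgroup P) : Set P) := by
  have hset : ((relCent B L hL : Subgroup P) : Set P) =
      ⋂ b ∈ (B : Set P), (fun h : P => h * b * h⁻¹ * b⁻¹) ⁻¹' (L : Set P) := by
    ext h
    simp only [Set.mem_iInter, Set.mem_preimage, SetLike.mem_coe]
    exact Iff.rfl
  rw [hset]
  refine isClosed_biInter fun b _ => hLc.preimage ?_
  exact ((continuous_id.mul continuous_const).mul continuous_inv).mul continuous_const

lemma hallWitt_mem {L : Subgroup P} (hL : L.Normal) {x u w : P}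
    (ha : ⁅⁅u⁻¹,w⁆,x⁻¹⁆ ∈ L) (hb : ⁅⁅w⁻¹,x⁻¹⁆,u⁆ ∈ L) :
    ⁅⁅x,u⁆,w⁆ ∈ L := by
  have key : ⁅⁅x,u⁆,w⁆
      = x * ((u * ⁅⁅u⁻¹,w⁆,x⁻¹⁆⁻¹ * u⁻¹) * (w * ⁅⁅w⁻¹,x⁻¹⁆,u⁆⁻¹ * w⁻¹)) * x⁻¹ := by
    simp only [commutatorElement_def]; group
  rw [key]
  have t1 : u * ⁅⁅u⁻¹,w⁆,x⁻¹⁆⁻¹ * u⁻¹ ∈ L := hL.conj_mem _ (L.inv_mem ha) u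
  have t2 : w * ⁅⁅w⁻¹,x⁻¹⁆,u⁆⁻¹ * w⁻¹ ∈ L := hL.conj_mem _ (L.inv_mem hb) w
  exact hL.conj_mem _ (L.mul_mem t1 t2) x

section Gain

variable (N : Subgroup P) (hNnorm : N.Normal) (hNopen : IsOpen (N : Set P))
include hNnorm hNopen

lemma commutator_succ_le (i : ℕ) (B L : Subgroup P) (hL : L.Normal) (hLc : IsClosed (L : Set P))
    (h1 : ∀ x ∈ seriesN N i, ∀ u ∈ N, ∀ w ∈ B, ⁅⁅x,u⁆, w⁆ ∈ L)
    (h2 : ∀ x ∈ seriesN N i, ∀ w ∈ B, ⁅x^2, w⁆ ∈ L) :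
    ⁅seriesN N (i+1), B⁆ ≤ L := by
  rw [Subgroup.commutator_le]
  intro g hg w hw
  suffices hsuff : seriesN N (i+1) ≤ relCent B L hL from hsuff hg w hw
  rw [seriesN_succ N hNnorm hNopen]
  apply Subgroup.topologicalClosure_minimal _ _ (relCent_isClosed B L hL hLc)
  apply sup_le
  · rw [Subgroup.commutator_le]
    intro x hx u hu
    exact mem_relCent.mpr fun w' hw' => h1 x hx u hu w' hw'
  · rw [Subgroup.closure_le]
    rintro y ⟨x, hx, rfl⟩
    exact mem_relCent.mpr fun w' hw' => h2 x hx w' hw'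

lemma comm_N_le (j : ℕ) : ⁅N, seriesN N j⁆ ≤ seriesN N (j+1) := by
  rw [Subgroup.commutator_comm]; exact comm_raw_le N hNnorm hNopen j

lemma comm_gain1 : ∀ i j, ⁅seriesN N i, seriesN N j⁆ ≤ seriesN N (i+j+1) := by
  intro i
  induction i with
  | zero =>
      intro j
      have h := comm_N_le N hNnorm hNopen j
      rw [Nat.zero_add]; exact h
  | succ i IH =>
      intro j
      show ⁅seriesN N (i+1), seriesN N j⁆ ≤ seriesN N (i+1+j+1)
      have hidx : i+1+j+1 = i+j+2 := by omega
      rw [hidx]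
      haveI hLn := seriesN_normal N hNnorm hNopen (i+j+2)
      apply commutator_succ_le N hNnorm hNopen i (seriesN N j) (seriesN N (i+j+2)) hLn
        (seriesN_isClosed N hNnorm hNopen (i+j+2))
      · -- Hall-Witt generators
        intro x hx u hu w hw
        apply hallWitt_mem hLn
        · -- ⁅⁅u⁻¹,w⁆,x⁻¹⁆
          have hy : ⁅u⁻¹,w⁆ ∈ seriesN N (j+1) :=
            comm_N_le N hNnorm hNopen j
              (Subgroup.commutator_mem_commutator (N.inv_mem hu) hw)
          have hle : ⁅seriesN N (j+1), seriesN N i⁆ ≤ seriesN N (i+j+2) := by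
            rw [Subgroup.commutator_comm]
            have := IH (j+1)
            have hidx2 : i+(j+1)+1 = i+j+2 := by omega
            rwa [hidx2] at this
          exact hle (Subgroup.commutator_mem_commutator hy ((seriesN N i).inv_mem hx))
        · -- ⁅⁅w⁻¹,x⁻¹⁆,u⁆
          have hy : ⁅w⁻¹,x⁻¹⁆ ∈ seriesN N (i+j+1) := by
            have hle : ⁅seriesN N j, seriesN N i⁆ ≤ seriesN N (i+j+1) := by
              rw [Subgroup.commutator_comm]; exact IH j
            exact hle (Subgroup.commutator_mem_commutator
              ((seriesN N j).inv_mem hw) ((seriesN N i).inv_mem hx))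
          exact comm_raw_le N hNnorm hNopen (i+j+1)
            (Subgroup.commutator_mem_commutator hy hu)
      · -- squares
        intro x hx w hw
        have hc0 : ⁅x,w⁆ ∈ seriesN N (i+j+1) :=
          IH j (Subgroup.commutator_mem_commutator hx hw)
        have key : ⁅x^2,w⁆ = ⁅x,⁅x,w⁆⁆ * ⁅x,w⁆^2 := by
          simp only [commutatorElement_def, pow_two]; group
        rw [key]
        refine Subgroup.mul_mem _ ?_ (sq_mem_seriesN N hNnorm hNopen hc0)
        have hle : ⁅seriesN N i, seriesN N (i+j+1)⁆ ≤ seriesN N (i+j+2) := by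
          rw [Subgroup.commutator_comm]
          exact (Subgroup.commutator_mono le_rfl (seriesN_le_N N hNnorm hNopen i)).trans
            (comm_raw_le N hNnorm hNopen (i+j+1))
        exact hle (Subgroup.commutator_mem_commutator hx hc0)

end Gain

end Descent14

namespace Descent14

variable {P : Type} [Group P] [TopologicalSpace P] [IsTopologicalGroup P]

section Gain2

variable (N : Subgroup P) (hNnorm : N.Normal) (hNopen : IsOpen (N : Set P))
variable (hpow : (⁅N, N⁆ : Subgroup P).topologicalClosure ≤
    (Subgroup.closure {y : P | ∃ x ∈ N, y = x ^ 4}).topologicalClosure)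
include hNnorm hNopen hpow

lemma NN_le_S2 : ⁅N, N⁆ ≤ seriesN N 2 := by
  have h4 : (Subgroup.closure {y : P | ∃ x ∈ N, y = x ^ 4}).topologicalClosure
      ≤ seriesN N 2 := by
    apply Subgroup.topologicalClosure_minimal _ _ (seriesN_isClosed N hNnorm hNopen 2)
    rw [Subgroup.closure_le]
    rintro y ⟨x, hx, rfl⟩
    have h1 : x ^ 2 ∈ seriesN N 1 := sq_mem_seriesN N hNnorm hNopen hx
    have h2 : (x ^ 2) ^ 2 ∈ seriesN N 2 := sq_mem_seriesN N hNnorm hNopen h1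
    have : x ^ 4 = (x ^ 2) ^ 2 := by rw [← pow_mul]
    rw [this]
    exact h2
  exact (Subgroup.le_topologicalClosure _).trans (hpow.trans h4)

lemma comm_gain2_base : ∀ j, ⁅N, seriesN N j⁆ ≤ seriesN N (j+2) := by
  intro j
  induction j with
  | zero => exact NN_le_S2 N hNnorm hNopen hpow
  | succ j IH =>
      rw [Subgroup.commutator_comm]
      haveI hLn := seriesN_normal N hNnorm hNopen (j+3)
      apply commutator_succ_le N hNnorm hNopen j N (seriesN N (j+3)) hLn
        (seriesN_isClosed N hNnorm hNopen (j+3))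
      · intro x hx u hu w hw
        apply hallWitt_mem hLn
        · have hy : ⁅u⁻¹,w⁆ ∈ seriesN N 2 :=
            NN_le_S2 N hNnorm hNopen hpow
              (Subgroup.commutator_mem_commutator (N.inv_mem hu) hw)
          have hle : ⁅seriesN N 2, seriesN N j⁆ ≤ seriesN N (j+3) := by
            have := comm_gain1 N hNnorm hNopen 2 j
            have hidx : 2+j+1 = j+3 := by omega
            rwa [hidx] at this
          exact hle (Subgroup.commutator_mem_commutator hy ((seriesN N j).inv_mem hx))
        · have hy : ⁅w⁻¹,x⁻¹⁆ ∈ seriesN N (j+2) :=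
            IH (Subgroup.commutator_mem_commutator (N.inv_mem hw)
              ((seriesN N j).inv_mem hx))
          exact comm_raw_le N hNnorm hNopen (j+2)
            (Subgroup.commutator_mem_commutator hy hu)
      · intro x hx w hw
        have hc0 : ⁅x,w⁆ ∈ seriesN N (j+2) := by
          have hle : ⁅seriesN N j, N⁆ ≤ seriesN N (j+2) := by
            rw [Subgroup.commutator_comm]; exact IH
          exact hle (Subgroup.commutator_mem_commutator hx hw)
        have key : ⁅x^2,w⁆ = ⁅x,⁅x,w⁆⁆ * ⁅x,w⁆^2 := by
          simp only [commutatorElement_def, pow_two]; group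
        rw [key]
        refine Subgroup.mul_mem _ ?_ (sq_mem_seriesN N hNnorm hNopen hc0)
        have hle : ⁅seriesN N j, seriesN N (j+2)⁆ ≤ seriesN N (j+3) := by
          rw [Subgroup.commutator_comm]
          exact (Subgroup.commutator_mono le_rfl (seriesN_le_N N hNnorm hNopen j)).trans
            (comm_raw_le N hNnorm hNopen (j+2))
        exact hle (Subgroup.commutator_mem_commutator hx hc0)

lemma comm_gain2 : ∀ i j, ⁅seriesN N i, seriesN N j⁆ ≤ seriesN N (i+j+2) := by
  intro i
  induction i with
  | zero =>
      intro j
      have h := comm_gain2_base N hNnorm hNopen hpow j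
      rw [Nat.zero_add]; exact h
  | succ i IH =>
      intro j
      show ⁅seriesN N (i+1), seriesN N j⁆ ≤ seriesN N (i+1+j+2)
      have hidx : i+1+j+2 = i+j+3 := by omega
      rw [hidx]
      haveI hLn := seriesN_normal N hNnorm hNopen (i+j+3)
      apply commutator_succ_le N hNnorm hNopen i (seriesN N j) (seriesN N (i+j+3)) hLn
        (seriesN_isClosed N hNnorm hNopen (i+j+3))
      · intro x hx u hu w hw
        apply hallWitt_mem hLn
        · have hy : ⁅u⁻¹,w⁆ ∈ seriesN N (j+2) :=
            comm_gain2_base N hNnorm hNopen hpow j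
              (Subgroup.commutator_mem_commutator (N.inv_mem hu) hw)
          have hle : ⁅seriesN N (j+2), seriesN N i⁆ ≤ seriesN N (i+j+3) := by
            rw [Subgroup.commutator_comm]
            have h := IH (j+2)
            have hidx2 : i+(j+2)+2 = i+j+4 := by omega
            rw [hidx2] at h
            exact h.trans (seriesN_antitone N hNnorm hNopen (by omega))
          exact hle (Subgroup.commutator_mem_commutator hy ((seriesN N i).inv_mem hx))
        · have hy : ⁅w⁻¹,x⁻¹⁆ ∈ seriesN N (i+j+2) := by
            have hle : ⁅seriesN N j, seriesN N i⁆ ≤ seriesN N (i+j+2) := by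
              rw [Subgroup.commutator_comm]; exact IH j
            exact hle (Subgroup.commutator_mem_commutator
              ((seriesN N j).inv_mem hw) ((seriesN N i).inv_mem hx))
          exact comm_raw_le N hNnorm hNopen (i+j+2)
            (Subgroup.commutator_mem_commutator hy hu)
      · intro x hx w hw
        have hc0 : ⁅x,w⁆ ∈ seriesN N (i+j+2) :=
          IH j (Subgroup.commutator_mem_commutator hx hw)
        have key : ⁅x^2,w⁆ = ⁅x,⁅x,w⁆⁆ * ⁅x,w⁆^2 := by
          simp only [commutatorElement_def, pow_two]; group
        rw [key]
        refine Subgroup.mul_mem _ ?_ (sq_mem_seriesN N hNnorm hNopen hc0)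
        have hle : ⁅seriesN N i, seriesN N (i+j+2)⁆ ≤ seriesN N (i+j+3) := by
          rw [Subgroup.commutator_comm]
          exact (Subgroup.commutator_mono le_rfl (seriesN_le_N N hNnorm hNopen i)).trans
            (comm_raw_le N hNnorm hNopen (i+j+2))
        exact hle (Subgroup.commutator_mem_commutator hx hc0)

/-- pointwise version -/
lemma comm_gain2_mem {i j k : ℕ} {x y : P} (hx : x ∈ seriesN N i) (hy : y ∈ seriesN N j)
    (hk : k ≤ i + j + 2) : ⁅x, y⁆ ∈ seriesN N k :=
  seriesN_antitone N hNnorm hNopen hk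
    (comm_gain2 N hNnorm hNopen hpow i j (Subgroup.commutator_mem_commutator hx hy))

end Gain2

end Descent14

namespace Descent14

variable {P : Type} [Group P] [TopologicalSpace P] [IsTopologicalGroup P]

section Sqrt

open Pointwise

variable [CompactSpace P] [T2Space P]
variable (N : Subgroup P) (hNnorm : N.Normal) (hNopen : IsOpen (N : Set P))
variable (hpow : (⁅N, N⁆ : Subgroup P).topologicalClosure ≤
    (Subgroup.closure {y : P | ∃ x ∈ N, y = x ^ 4}).topologicalClosure)
include hNnorm hNopen hpow

lemma sq_cover (k : ℕ) {u : P} (hu : u ∈ seriesN N (k+1)) :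
    ∃ x ∈ seriesN N k, (x^2)⁻¹ * u ∈ seriesN N (k+2) := by
  haveI hnorm2 := seriesN_normal N hNnorm hNopen (k+2)
  set E : Subgroup P :=
    { carrier := ((fun x : P => x^2) '' (seriesN N k : Set P)) * (seriesN N (k+2) : Set P)
      one_mem' := by
        have h1 : (1:P)^2 ∈ (fun x : P => x^2) '' (seriesN N k : Set P) :=
          ⟨1, (seriesN N k).one_mem, rfl⟩
        have := Set.mul_mem_mul h1 (SetLike.mem_coe.mpr (seriesN N (k+2)).one_mem)
        simpa using this
      mul_mem' := by
        rintro p q ⟨_, ⟨x, hx, rfl⟩, a, ha, rfl⟩ ⟨_, ⟨y, hy, rfl⟩, b, hb, rfl⟩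
        simp only at *
        have key : (x^2*a)*(y^2*b) = (x*y)^2 *
            (((y^2)⁻¹ * ⁅x⁻¹,y⁆⁻¹ * y^2) * (((y^2)⁻¹ * a * y^2) * b)) := by
          simp only [commutatorElement_def, pow_two]; group
        rw [key]
        apply Set.mul_mem_mul
        · exact ⟨x*y, (seriesN N k).mul_mem hx hy, rfl⟩
        · apply SetLike.mem_coe.mpr
          refine Subgroup.mul_mem _ ?_ (Subgroup.mul_mem _ ?_ hb)
          · have hc : ⁅x⁻¹,y⁆ ∈ seriesN N (k+2) :=
              comm_gain2_mem N hNnorm hNopen hpow ((seriesN N k).inv_mem hx) hy (by omega)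
            have := hnorm2.conj_mem _ (Subgroup.inv_mem _ hc) (y^2)⁻¹
            simpa using this
          · have := hnorm2.conj_mem a (SetLike.mem_coe.mp ha) (y^2)⁻¹
            simpa using this
      inv_mem' := by
        rintro p ⟨_, ⟨x, hx, rfl⟩, a, ha, rfl⟩
        simp only at *
        have key : (x^2*a)⁻¹ = (x⁻¹)^2 * (x^2 * a⁻¹ * (x^2)⁻¹) := by group
        rw [key]
        apply Set.mul_mem_mul
        · exact ⟨x⁻¹, (seriesN N k).inv_mem hx, rfl⟩
        · apply SetLike.mem_coe.mpr
          have := hnorm2.conj_mem a⁻¹ (Subgroup.inv_mem _ (SetLike.mem_coe.mp ha)) (x^2)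
          simpa using this }
  have hEclosed : IsClosed (E : Set P) := by
    have hc1 : IsCompact ((fun x : P => x^2) '' (seriesN N k : Set P)) :=
      ((seriesN_isClosed N hNnorm hNopen k).isCompact).image (continuous_pow 2)
    have hc2 : IsCompact (seriesN N (k+2) : Set P) :=
      (seriesN_isClosed N hNnorm hNopen (k+2)).isCompact
    exact (hc1.mul hc2).isClosed
  have hle : seriesN N (k+1) ≤ E := by
    rw [seriesN_succ N hNnorm hNopen]
    apply Subgroup.topologicalClosure_minimal _ _ hEclosed
    apply sup_le
    · rw [Subgroup.commutator_le]
      intro x hx v hv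
      have hv0 : v ∈ seriesN N 0 := hv
      have hc : ⁅x,v⁆ ∈ seriesN N (k+2) :=
        comm_gain2_mem N hNnorm hNopen hpow hx hv0 (by omega)
      show ⁅x,v⁆ ∈ (E : Set P)
      have h1 : (1:P)^2 ∈ (fun x : P => x^2) '' (seriesN N k : Set P) :=
        ⟨1, (seriesN N k).one_mem, rfl⟩
      have hc' : ⁅x,v⁆ ∈ (seriesN N (k+2) : Set P) := hc
      have h2 : ((1:P)^2) * ⁅x,v⁆ ∈
          ((fun x : P => x^2) '' (seriesN N k : Set P)) * (seriesN N (k+2) : Set P) :=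
        Set.mul_mem_mul h1 hc'
      simp only [one_pow, one_mul] at h2; exact h2
    · rw [Subgroup.closure_le]
      rintro y ⟨x, hx, rfl⟩
      show x^2 ∈ (E : Set P)
      have h1 : x^2 ∈ (fun x : P => x^2) '' (seriesN N k : Set P) := ⟨x, hx, rfl⟩
      have hc' : (1:P) ∈ (seriesN N (k+2) : Set P) := (seriesN N (k+2)).one_mem
      have h2 : x^2 * 1 ∈
          ((fun x : P => x^2) '' (seriesN N k : Set P)) * (seriesN N (k+2) : Set P) :=
        Set.mul_mem_mul h1 hc'
      simp only [mul_one] at h2; exact h2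
  obtain ⟨_, ⟨x, hx, rfl⟩, c, hc, huc⟩ := hle hu
  refine ⟨x, hx, ?_⟩
  have : (x^2)⁻¹ * u = c := by rw [← huc]; group
  rw [this]
  exact SetLike.mem_coe.mp hc

lemma approx_sqrt (k : ℕ) {u : P} (hu : u ∈ seriesN N (k+1)) (d : ℕ) :
    ∃ m ∈ seriesN N k, (m^2)⁻¹ * u ∈ seriesN N (k+1+d) := by
  induction d with
  | zero => exact ⟨1, (seriesN N k).one_mem, by simpa using hu⟩
  | succ d IH =>
      obtain ⟨m, hm, hr⟩ := IH
      have hr0 : (m^2)⁻¹ * u ∈ seriesN N (k+d+1) := by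
        rwa [show k+d+1 = k+1+d by omega]
      obtain ⟨w, hw, hr'⟩ := sq_cover N hNnorm hNopen hpow (k+d) hr0
      refine ⟨m*w, (seriesN N k).mul_mem hm
        (seriesN_antitone N hNnorm hNopen (by omega) hw), ?_⟩
      set r' := (w^2)⁻¹ * ((m^2)⁻¹ * u) with hr'def
      have hu' : u = m^2*(w^2*r') := by rw [hr'def]; group
      have key : ((m*w)^2)⁻¹ * u = (w⁻¹ * ⁅m⁻¹,w⁻¹⁆ * w) * r' := by
        conv_lhs => rw [hu']
        simp only [commutatorElement_def, pow_two]; group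
      rw [key]
      haveI hnorm := seriesN_normal N hNnorm hNopen (k+1+(d+1))
      have hidx : k+1+(d+1) = k+d+2 := by omega
      refine Subgroup.mul_mem _ ?_ (by rw [hidx]; exact hr')
      have hc : ⁅m⁻¹,w⁻¹⁆ ∈ seriesN N (k+1+(d+1)) :=
        comm_gain2_mem N hNnorm hNopen hpow ((seriesN N k).inv_mem hm)
          ((seriesN N (k+d)).inv_mem hw) (by omega)
      have := hnorm.conj_mem _ hc w⁻¹
      simpa using this

end Sqrt

end Descent14

namespace Descent14

/-- In a finite 2-group, a normal subgroup equal to the subgroup generated by its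
commutators with `M` and its squares is trivial. -/
lemma frattini_finite {Q : Type} [Group Q] [Finite Q] (hQ : IsPGroup 2 Q)
    (M H : Subgroup Q) (hHnorm : H.Normal)
    (heq : H = ⁅H, M⁆ ⊔ Subgroup.closure {y : Q | ∃ x ∈ H, y = x^2}) :
    H = ⊥ := by
  haveI : Fact (Nat.Prime 2) := ⟨Nat.prime_two⟩
  haveI := hHnorm
  have hlcs : ∀ (G : Type) [Group G] (n : ℕ),
      (⊤ : Subgroup G).lowerCentralSeries (n+1) = ⁅(⊤ : Subgroup G).lowerCentralSeries n, (⊤ : Subgroup G)⁆ := by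
    intro G _ n
    rfl
  -- squares of H land in any subgroup containing the square-closure
  -- Step 1: W
  set W : Subgroup Q := ⁅H, H⁆ ⊔ Subgroup.closure {y : Q | ∃ x ∈ H, y = x^2} with hWdef
  haveI hWn : W.Normal := by
    haveI h1 : (⁅H, H⁆ : Subgroup Q).Normal := Subgroup.commutator_normal _ _
    haveI h2 : (Subgroup.closure {y : Q | ∃ x ∈ H, y = x^2}).Normal := by
      apply closure_normal_of_conjInv
      rintro g y ⟨x, hx, rfl⟩
      exact ⟨g * x * g⁻¹, hHnorm.conj_mem x hx g, (conj_pow ..).symm⟩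
    exact Subgroup.sup_normal _ _
  have hWle : W ≤ H := by
    apply sup_le
    · rw [Subgroup.commutator_le]
      intro a ha b hb
      have : ⁅a,b⁆ = a * (b * a⁻¹ * b⁻¹) := by group
      rw [this]
      exact H.mul_mem ha (by simpa using hHnorm.conj_mem a⁻¹ (H.inv_mem ha) b)
    · rw [Subgroup.closure_le]
      rintro y ⟨x, hx, rfl⟩
      exact H.pow_mem hx 2
  -- Step 2: H ≤ W
  have hHW : H ≤ W := by
    set ρ := QuotientGroup.mk' W
    have hker : ρ.ker = W := QuotientGroup.ker_mk' W
    have hsq : (Subgroup.closure {y : Q | ∃ x ∈ H, y = x^2}).map ρ = ⊥ := by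
      rw [MonoidHom.map_closure]
      rw [Subgroup.closure_eq_bot_iff]
      rintro y ⟨z, ⟨x, hx, rfl⟩, rfl⟩
      have hxW : x^2 ∈ W := Subgroup.mem_sup_right (Subgroup.subset_closure ⟨x, hx, rfl⟩)
      have : ρ (x^2) = 1 := by rwa [← MonoidHom.mem_ker, hker]
      simpa using this
    have hH1 : H.map ρ = ⁅H.map ρ, M.map ρ⁆ := by
      conv_lhs => rw [heq]
      rw [Subgroup.map_sup, Subgroup.map_commutator, hsq, sup_bot_eq]
    have hlow : ∀ n, H.map ρ ≤ (⊤ : Subgroup (Q ⧸ W)).lowerCentralSeries n := by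
      intro n
      induction n with
      | zero => exact le_top
      | succ n IH =>
          rw [hlcs, hH1]
          exact Subgroup.commutator_mono IH le_top
    obtain ⟨n, hn⟩ := Subgroup.nilpotent_iff_lowerCentralSeries.mp ((hQ.to_quotient W).isNilpotent)
    have : H.map ρ = ⊥ := le_bot_iff.mp (hn ▸ hlow n)
    rw [Subgroup.map_eq_bot_iff, hker] at this
    exact this
  have hHWeq : H = W := le_antisymm hHW hWle
  -- Step 3: kill squares via the commutator quotient
  have hHcomm : H = ⁅H, H⁆ := by
    haveI hCn : (⁅H, H⁆ : Subgroup Q).Normal := Subgroup.commutator_normal _ _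
    set ρ₂ := QuotientGroup.mk' (⁅H, H⁆ : Subgroup Q)
    have hker : ρ₂.ker = ⁅H, H⁆ := QuotientGroup.ker_mk' _
    set H₂ := H.map ρ₂ with hH₂def
    have hcommel : ∀ a ∈ H₂, ∀ b ∈ H₂, Commute a b := by
      rintro a ⟨x, hx, rfl⟩ b ⟨y, hy, rfl⟩
      have h1 : ρ₂ ⁅x, y⁆ = 1 := by
        rw [← MonoidHom.mem_ker, hker]
        exact Subgroup.commutator_mem_commutator hx hy
      have h2 : ⁅ρ₂ x, ρ₂ y⁆ = 1 := by rw [← map_commutatorElement]; exact h1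
      exact commutatorElement_eq_one_iff_commute.mp h2
    have hsetimg : ⇑ρ₂ '' {y : Q | ∃ x ∈ H, y = x^2}
        = {y : Q ⧸ ⁅H,H⁆ | ∃ x ∈ H₂, y = x^2} := by
      ext y
      constructor
      · rintro ⟨z, ⟨x, hx, rfl⟩, rfl⟩
        exact ⟨ρ₂ x, ⟨x, hx, rfl⟩, by simp [map_pow]⟩
      · rintro ⟨x', ⟨x, hx, rfl⟩, rfl⟩
        exact ⟨x^2, ⟨x, hx, rfl⟩, by simp [map_pow]⟩
    have hbot : (⁅H, H⁆ : Subgroup Q).map ρ₂ = ⊥ := by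
      rw [Subgroup.map_eq_bot_iff, hker]
    have h0 : H₂ = Subgroup.map ρ₂ (⁅H,H⁆ ⊔ Subgroup.closure {y : Q | ∃ x ∈ H, y = x^2}) :=
      congrArg (Subgroup.map ρ₂) (hHWeq.trans hWdef)
    have hH₂eq : H₂ = Subgroup.closure {y : Q ⧸ ⁅H,H⁆ | ∃ x ∈ H₂, y = x^2} := by
      conv_lhs => rw [h0, Subgroup.map_sup, MonoidHom.map_closure, hbot, bot_sup_eq, hsetimg]
    -- the set of squares of H₂ is a subgroup
    set T : Subgroup (Q ⧸ ⁅H,H⁆) :=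
      { carrier := {y : Q ⧸ ⁅H,H⁆ | ∃ x ∈ H₂, y = x^2}
        one_mem' := ⟨1, H₂.one_mem, by simp⟩
        mul_mem' := by
          rintro a b ⟨x, hx, rfl⟩ ⟨y, hy, rfl⟩
          exact ⟨x*y, H₂.mul_mem hx hy, ((hcommel x hx y hy).mul_pow 2).symm⟩
        inv_mem' := by
          rintro a ⟨x, hx, rfl⟩
          exact ⟨x⁻¹, H₂.inv_mem hx, by rw [inv_pow]⟩ }
    have hsq2 : ∀ g ∈ H₂, ∃ x ∈ H₂, g = x^2 := by
      intro g hg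
      have : H₂ ≤ T := by rw [hH₂eq]; exact Subgroup.closure_le T |>.mpr fun y hy => hy
      exact this hg
    have hsqr : ∀ r : ℕ, ∀ g ∈ H₂, ∃ x ∈ H₂, g = x^(2^r) := by
      intro r
      induction r with
      | zero => intro g hg; exact ⟨g, hg, by simp⟩
      | succ r IH =>
          intro g hg
          obtain ⟨x, hx, rfl⟩ := IH g hg
          obtain ⟨y, hy, rfl⟩ := hsq2 x hx
          exact ⟨y, hy, by rw [← pow_mul, pow_succ, mul_comm 2 (2^r)]⟩
    obtain ⟨n, hcard⟩ := IsPGroup.iff_card.mp (hQ.to_quotient (⁅H, H⁆ : Subgroup Q))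
    have hH₂bot : H₂ = ⊥ := by
      rw [Subgroup.eq_bot_iff_forall]
      intro g hg
      obtain ⟨x, hx, rfl⟩ := hsqr n g hg
      rw [← hcard]
      exact pow_card_eq_one'
    rw [hH₂def, Subgroup.map_eq_bot_iff, hker] at hH₂bot
    exact le_antisymm hH₂bot (hWle.trans' le_sup_left |>.trans le_rfl)
  -- Step 4: conclude via nilpotency of Q
  have hlow : ∀ n, H ≤ (⊤ : Subgroup Q).lowerCentralSeries n := by
    intro n
    induction n with
    | zero => exact le_top
    | succ n IH =>
        rw [hlcs]
        conv_lhs => rw [hHcomm]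
        exact Subgroup.commutator_mono IH le_top
  obtain ⟨n, hn⟩ := Subgroup.nilpotent_iff_lowerCentralSeries.mp hQ.isNilpotent
  exact le_bot_iff.mp (hn ▸ hlow n)

end Descent14

namespace Descent14

variable {P : Type} [Group P] [TopologicalSpace P] [IsTopologicalGroup P]

section L0

variable [CompactSpace P] [T2Space P] [TotallyDisconnectedSpace P]
variable (N : Subgroup P) (hNnorm : N.Normal) (hNopen : IsOpen (N : Set P))
variable (hpro : ∀ (V : Subgroup P) [V.Normal], IsOpen (V : Set P) → IsPGroup 2 (P ⧸ V))
include hNnorm hNopen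

omit [CompactSpace P] [T2Space P] [TotallyDisconnectedSpace P] hNnorm hNopen in
lemma map_topClosure_eq (V : Subgroup P) (hVn : V.Normal) (hV : IsOpen (V : Set P))
    (A : Subgroup P) :
    haveI := hVn
    (A.topologicalClosure).map (QuotientGroup.mk' V) = A.map (QuotientGroup.mk' V) := by
  haveI := hVn
  apply le_antisymm
  · have h1 : A.topologicalClosure ≤ A ⊔ V := by
      apply Subgroup.topologicalClosure_minimal _ le_sup_left
      exact Subgroup.isClosed_of_isOpen _ (Subgroup.isOpen_mono le_sup_right hV)
    have h2 : V.map (QuotientGroup.mk' V) = ⊥ := by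
      rw [Subgroup.map_eq_bot_iff, QuotientGroup.ker_mk']
    calc (A.topologicalClosure).map (QuotientGroup.mk' V)
        ≤ (A ⊔ V).map (QuotientGroup.mk' V) := Subgroup.map_mono h1
      _ = A.map (QuotientGroup.mk' V) := by
          rw [Subgroup.map_sup, h2, sup_bot_eq]
  · exact Subgroup.map_mono (Subgroup.le_topologicalClosure A)

include hpro in
lemma exists_seriesN_le (V : Subgroup P) (hVn : V.Normal) (hV : IsOpen (V : Set P)) :
    ∃ k, seriesN N k ≤ V := by
  haveI := hVn
  haveI hfin : Finite (P ⧸ V) := V.quotient_finite_of_isOpen hV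
  have hPG : IsPGroup 2 (P ⧸ V) := hpro V hV
  set π := QuotientGroup.mk' V with hπ
  set TQ : ℕ → Subgroup (P ⧸ V) := fun k => (seriesN N k).map π with hTQ
  have himg : ∀ k, ⇑π '' {y : P | ∃ x ∈ seriesN N k, y = x^2}
      = {y : P ⧸ V | ∃ x ∈ TQ k, y = x^2} := by
    intro k
    ext y
    constructor
    · rintro ⟨z, ⟨x, hx, rfl⟩, rfl⟩
      exact ⟨π x, ⟨x, hx, rfl⟩, by simp [map_pow]⟩
    · rintro ⟨x', ⟨x, hx, rfl⟩, rfl⟩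
      exact ⟨x^2, ⟨x, hx, rfl⟩, by simp [map_pow]⟩
  have hstep : ∀ k, TQ (k+1) = ⁅TQ k, TQ 0⁆ ⊔
      Subgroup.closure {y : P ⧸ V | ∃ x ∈ TQ k, y = x^2} := by
    intro k
    have h1 : TQ (k+1) = (⁅seriesN N k, N⁆ ⊔
        Subgroup.closure {y : P | ∃ x ∈ seriesN N k, y = x ^ 2}).map π := by
      rw [hTQ]
      exact map_topClosure_eq V hVn hV _
    rw [h1, Subgroup.map_sup, Subgroup.map_commutator, MonoidHom.map_closure, himg]
    rfl
  have hmono : ∀ k, TQ (k+1) ≤ TQ k := fun k =>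
    Subgroup.map_mono (seriesN_succ_le N hNnorm hNopen k)
  have hstab : ∃ k, TQ k = TQ (k+1) := by
    by_contra hcon
    push_neg at hcon
    have hlt : ∀ k, ((TQ (k+1) : Set (P ⧸ V))).ncard < ((TQ k : Set (P ⧸ V))).ncard := by
      intro k
      apply Set.ncard_lt_ncard
      · have hltsub : TQ (k+1) < TQ k := (hmono k).lt_of_ne fun h => hcon k h.symm
        exact SetLike.lt_iff_le_and_exists.mp hltsub |>.elim
          fun hle hex => ⟨hle, by obtain ⟨x, hx1, hx2⟩ := hex; exact fun hsub => hx2 (hsub hx1)⟩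
      · exact Set.toFinite _
    have hchain : ∀ k, ((TQ k : Set (P ⧸ V))).ncard + k ≤ ((TQ 0 : Set (P ⧸ V))).ncard := by
      intro k
      induction k with
      | zero => omega
      | succ k IH => have := hlt k; omega
    have := hchain (((TQ 0 : Set (P ⧸ V))).ncard + 1)
    omega
  obtain ⟨k₀, heq0⟩ := hstab
  haveI hHn : (TQ k₀).Normal :=
    (seriesN_normal N hNnorm hNopen k₀).map π (QuotientGroup.mk'_surjective V)
  have heq : TQ k₀ = ⁅TQ k₀, TQ 0⁆ ⊔
      Subgroup.closure {y : P ⧸ V | ∃ x ∈ TQ k₀, y = x^2} := heq0.trans (hstep k₀)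
  have hbot : TQ k₀ = ⊥ := frattini_finite hPG (TQ 0) (TQ k₀) hHn heq
  refine ⟨k₀, ?_⟩
  have := (Subgroup.map_eq_bot_iff _).mp hbot
  rwa [QuotientGroup.ker_mk'] at this

include hpro in
lemma seriesN_inter_eq_one {g : P} (hg : ∀ k, g ∈ seriesN N k) : g = 1 := by
  by_contra hne
  haveI : TotallySeparatedSpace P :=
    loc_compact_t2_tot_disc_iff_tot_sep.mp ‹TotallyDisconnectedSpace P›
  obtain ⟨U, hUclopen, h1U, hgU⟩ :=
    exists_isClopen_of_totally_separated (Ne.symm hne)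
  obtain ⟨Hop, hHsub⟩ :=
    IsTopologicalGroup.exist_openNormalSubgroup_sub_clopen_nhds_of_one hUclopen h1U
  haveI := Hop.isNormal'
  obtain ⟨k, hk⟩ := exists_seriesN_le N hNnorm hNopen hpro Hop.toSubgroup
    Hop.isNormal' Hop.isOpen
  exact hgU (hHsub (hk (hg k)))

end L0

end Descent14

namespace Descent14

variable {P : Type} [Group P] [TopologicalSpace P] [IsTopologicalGroup P]

section Exact

variable [CompactSpace P] [T2Space P] [TotallyDisconnectedSpace P]
variable (N : Subgroup P) (hNnorm : N.Normal) (hNopen : IsOpen (N : Set P))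
variable (hpow : (⁅N, N⁆ : Subgroup P).topologicalClosure ≤
    (Subgroup.closure {y : P | ∃ x ∈ N, y = x ^ 4}).topologicalClosure)
variable (hpro : ∀ (V : Subgroup P) [V.Normal], IsOpen (V : Set P) → IsPGroup 2 (P ⧸ V))
variable (htf : ∀ g ∈ N, IsOfFinOrder g → g = 1)
include hNnorm hNopen hpro

include hpow in
lemma exact_sqrt (k : ℕ) {u : P} (hu : u ∈ seriesN N (k+1)) :
    ∃ d ∈ seriesN N k, d^2 = u := by
  set F : ℕ → Set P := fun j =>
    (seriesN N k : Set P) ∩ ((fun d : P => (d^2)⁻¹ * u) ⁻¹' (seriesN N (k+1+j) : Set P))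
    with hF
  have hanti : ∀ {i j : ℕ}, i ≤ j → F j ⊆ F i := by
    intro i j hij
    apply Set.inter_subset_inter_right
    apply Set.preimage_mono
    exact seriesN_antitone N hNnorm hNopen (by omega)
  have hclosed : ∀ j, IsClosed (F j) := by
    intro j
    apply IsClosed.inter (seriesN_isClosed N hNnorm hNopen k)
    apply IsClosed.preimage _ (seriesN_isClosed N hNnorm hNopen (k+1+j))
    exact ((continuous_pow 2).inv).mul continuous_const
  have hne : ∀ j, (F j).Nonempty := by
    intro j
    obtain ⟨m, hm, hr⟩ := approx_sqrt N hNnorm hNopen hpow k hu j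
    exact ⟨m, hm, hr⟩
  have hinter : (⋂ j, F j).Nonempty := by
    apply IsCompact.nonempty_iInter_of_directed_nonempty_isCompact_isClosed F
      ?_ hne (fun j => (hclosed j).isCompact) hclosed
    intro i j
    exact ⟨max i j, hanti (le_max_left i j), hanti (le_max_right i j)⟩
  obtain ⟨d, hd⟩ := hinter
  simp only [Set.mem_iInter] at hd
  have hd0 := hd 0
  refine ⟨d, hd0.1, ?_⟩
  have hall : ∀ r, (d^2)⁻¹ * u ∈ seriesN N r := by
    intro r
    have := (hd r).2
    exact seriesN_antitone N hNnorm hNopen (by omega) this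
  have h1 : (d^2)⁻¹ * u = 1 := seriesN_inter_eq_one N hNnorm hNopen hpro hall
  rw [inv_mul_eq_one] at h1
  exact h1

include hpow htf in
lemma graded_inj (k : ℕ) {c : P} (hc : c ∈ seriesN N k) (hc2 : c^2 ∈ seriesN N (k+2)) :
    c ∈ seriesN N (k+1) := by
  set F : ℕ → Set P := fun j =>
    ((fun z : P => c * z) '' (seriesN N (k+1) : Set P)) ∩
      ((fun e : P => e^2) ⁻¹' (seriesN N (k+2+j) : Set P)) with hF
  have hanti : ∀ {i j : ℕ}, i ≤ j → F j ⊆ F i := by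
    intro i j hij
    apply Set.inter_subset_inter_right
    apply Set.preimage_mono
    exact seriesN_antitone N hNnorm hNopen (by omega)
  have hclosed : ∀ j, IsClosed (F j) := by
    intro j
    apply IsClosed.inter
    · exact (Homeomorph.mulLeft c).isClosedMap _ (seriesN_isClosed N hNnorm hNopen (k+1))
    · exact IsClosed.preimage (continuous_pow 2) (seriesN_isClosed N hNnorm hNopen (k+2+j))
  have hne : ∀ j, (F j).Nonempty := by
    intro j
    induction j with
    | zero =>
        refine ⟨c, ⟨1, (seriesN N (k+1)).one_mem, by simp⟩, ?_⟩
        simpa using hc2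
    | succ j IH =>
        obtain ⟨e, ⟨z, hz, hez⟩, he2⟩ := IH
        simp only at hez
        simp only [Set.mem_preimage, SetLike.mem_coe] at he2
        have he2' : e^2 ∈ seriesN N ((k+1+j)+1) := by
          rwa [show (k+1+j)+1 = k+2+j by omega]
        obtain ⟨d, hd, hd2⟩ := exact_sqrt N hNnorm hNopen hpow hpro (k+1+j) he2'
        refine ⟨e * d⁻¹, ⟨z * d⁻¹, ?_, by simp only; rw [← mul_assoc, hez]⟩, ?_⟩
        · exact (seriesN N (k+1)).mul_mem hz
            ((seriesN N (k+1)).inv_mem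
              (seriesN_antitone N hNnorm hNopen (by omega) hd))
        · have key : (e*d⁻¹)^2 = e^2 * ⁅e⁻¹,d⁻¹⁆ * (d^2)⁻¹ := by
            simp only [commutatorElement_def, pow_two]; group
          simp only [Set.mem_preimage, SetLike.mem_coe]
          rw [key, ← hd2]
          have hcomm : ⁅e⁻¹,d⁻¹⁆ ∈ seriesN N (k+2+(j+1)) := by
            have heS : e ∈ seriesN N k := by
              rw [← hez]
              exact (seriesN N k).mul_mem hc
                (seriesN_antitone N hNnorm hNopen (by omega) hz)
            exact comm_gain2_mem N hNnorm hNopen hpow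
              ((seriesN N k).inv_mem heS)
              ((seriesN N (k+1+j)).inv_mem hd) (by omega)
          haveI hnorm := seriesN_normal N hNnorm hNopen (k+2+(j+1))
          exact hnorm.conj_mem _ hcomm (d^2)
  have hinter : (⋂ j, F j).Nonempty := by
    apply IsCompact.nonempty_iInter_of_directed_nonempty_isCompact_isClosed F
      ?_ hne (fun j => (hclosed j).isCompact) hclosed
    intro i j
    exact ⟨max i j, hanti (le_max_left i j), hanti (le_max_right i j)⟩
  obtain ⟨e, he⟩ := hinter
  simp only [Set.mem_iInter] at he
  obtain ⟨z, hz, hez⟩ := (he 0).1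
  simp only at hez
  have hall : ∀ r, e^2 ∈ seriesN N r := by
    intro r
    have h2 := (he r).2
    simp only [Set.mem_preimage, SetLike.mem_coe] at h2
    exact seriesN_antitone N hNnorm hNopen (by omega) h2
  have hsq1 : e^2 = 1 := seriesN_inter_eq_one N hNnorm hNopen hpro hall
  have heN : e ∈ N := by
    rw [← hez]
    exact seriesN_le_N N hNnorm hNopen k
      ((seriesN N k).mul_mem hc (seriesN_antitone N hNnorm hNopen (by omega) hz))
  have hford : IsOfFinOrder e := isOfFinOrder_iff_pow_eq_one.mpr ⟨2, by omega, hsq1⟩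
  have he1 : e = 1 := htf e heN hford
  have hcz1 : c * z = 1 := by rw [hez]; exact he1
  have hcz : c = z⁻¹ := by
    rw [eq_inv_iff_mul_eq_one]
    exact hcz1
  rw [hcz]
  exact (seriesN N (k+1)).inv_mem hz

end Exact

end Descent14

namespace Descent14

variable {P : Type} [Group P] [TopologicalSpace P] [IsTopologicalGroup P]

section Phi

variable (φ : P ≃* P) (hφcont : Continuous ⇑φ) (hφ2 : ∀ x, φ (φ x) = x)
include hφcont hφ2

lemma phi_symm_funeq : ⇑φ.symm = ⇑φ := by
  funext x
  conv_lhs => rw [← hφ2 x]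
  exact φ.symm_apply_apply (φ x)

def phiHomeo : P ≃ₜ P where
  toEquiv := φ.toEquiv
  continuous_toFun := hφcont
  continuous_invFun := by
    show Continuous ⇑φ.symm
    rw [phi_symm_funeq φ hφcont hφ2]
    exact hφcont

lemma map_topClosure_phi (A : Subgroup P) :
    (A.topologicalClosure).map φ.toMonoidHom = (A.map φ.toMonoidHom).topologicalClosure := by
  apply SetLike.ext'
  have h1 : ((A.topologicalClosure).map φ.toMonoidHom : Set P) = ⇑φ '' closure (A : Set P) := by
    rw [Subgroup.coe_map, Subgroup.topologicalClosure_coe]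
    rfl
  have h2 : ((A.map φ.toMonoidHom).topologicalClosure : Set P)
      = closure (⇑φ '' (A : Set P)) := by
    rw [Subgroup.topologicalClosure_coe, Subgroup.coe_map]
    rfl
  rw [h1, h2]
  exact (phiHomeo φ hφcont hφ2).image_closure (A : Set P)

variable (N : Subgroup P) (hNnorm : N.Normal) (hNopen : IsOpen (N : Set P))
variable (hφN : N.map φ.toMonoidHom = N)
include hNnorm hNopen hφN

lemma map_seriesN_phi (k : ℕ) : (seriesN N k).map φ.toMonoidHom = seriesN N k := by
  induction k with
  | zero => exact hφN
  | succ k IH =>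
      have himg : ⇑φ.toMonoidHom '' {y : P | ∃ x ∈ seriesN N k, y = x^2}
          = {y : P | ∃ x ∈ seriesN N k, y = x^2} := by
        ext y
        constructor
        · rintro ⟨z, ⟨x, hx, rfl⟩, rfl⟩
          refine ⟨φ x, ?_, by simp [map_pow]⟩
          rw [← IH]; exact ⟨x, hx, rfl⟩
        · rintro ⟨x, hx, rfl⟩
          have hx' : x ∈ (seriesN N k).map φ.toMonoidHom := by rw [IH]; exact hx
          obtain ⟨x₀, hx₀, rfl⟩ := hx'
          exact ⟨x₀^2, ⟨x₀, hx₀, rfl⟩, by simp [map_pow]⟩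
      rw [seriesN_succ N hNnorm hNopen, map_topClosure_phi φ hφcont hφ2,
          Subgroup.map_sup, Subgroup.map_commutator, MonoidHom.map_closure, IH, hφN, himg,
          ← seriesN_succ N hNnorm hNopen]

lemma phi_mem_seriesN {k : ℕ} {x : P} (hx : x ∈ seriesN N k) : φ x ∈ seriesN N k := by
  have h : φ x ∈ (seriesN N k).map φ.toMonoidHom := ⟨x, hx, rfl⟩
  rwa [map_seriesN_phi φ hφcont hφ2 N hNnorm hNopen hφN] at h

end Phi

end Descent14


/-- Let `P` be a pro-2 group of finite rank, `N` a normal open uniform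
subgroup of `P`, and `φ` a continuous automorphism of `P` of order 2 with `φ(N) = N`.
Then for all `s > t ≥ 2` and every `n ∈ N_t` with `φ(n)N_s = n⁻¹N_s`, there exists
`m ∈ N_{t-1}` with `nN_{s-1} = φ(m⁻¹)mN_{s-1}`.  (Here `N_k = seriesN N (k-1)`.) -/
theorem descent_for_order_two_automorphism
    (P : Type) [Group P] [TopologicalSpace P] [IsTopologicalGroup P]
    [CompactSpace P] [T2Space P] [TotallyDisconnectedSpace P]
    (hpro : IsProTwo P) (hrank : HasFiniteRank P)
    (N : Subgroup P) (hNnorm : N.Normal) (hNopen : IsOpen (N : Set P))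
    (hNunif : IsUniform2 N)
    (φ : P ≃* P) (hφcont : Continuous φ) (hφ2 : ∀ x, φ (φ x) = x)
    (hφne : φ ≠ MulEquiv.refl P) (hφN : N.map φ.toMonoidHom = N)
    (s t : ℕ) (ht : 2 ≤ t) (hts : t < s)
    (n : P) (hn : n ∈ seriesN N (t - 1)) (hcos : n * φ n ∈ seriesN N (s - 1)) :
    ∃ m ∈ seriesN N (t - 2), n⁻¹ * (φ m⁻¹ * m) ∈ seriesN N (s - 2) := by
  open Descent14 in
  obtain ⟨-, htf, hpow⟩ := hNunif
  set a := t - 2 with hadef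
  set b := s - 2 with hbdef
  have hta : t - 1 = a + 1 := by omega
  have hsb : s - 1 = b + 1 := by omega
  have hab : a + 1 ≤ b := by omega
  rw [hta] at hn
  rw [hsb] at hcos
  have hφc : Continuous ⇑φ := hφcont
  -- Step 1: approximate square root of n
  obtain ⟨m, hm, hr0⟩ := Descent14.approx_sqrt N hNnorm hNopen hpow a hn (b - a)
  have hr : (m^2)⁻¹ * n ∈ seriesN N (b+1) := by
    rwa [show a+1+(b-a) = b+1 by omega] at hr0
  set r := (m^2)⁻¹ * n with hrdef
  set fm := φ m with hfmdef
  have hfm : fm ∈ seriesN N a :=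
    Descent14.phi_mem_seriesN φ hφc hφ2 N hNnorm hNopen hφN hm
  set c := m * fm with hcdef
  have hc : c ∈ seriesN N a := (seriesN N a).mul_mem hm hfm
  -- z1 : m² φ(m)² ∈ S (b+1)
  have hm2 : m^2 = n * r⁻¹ := by rw [hrdef]; group
  have hfm2 : fm^2 = φ n * (φ r)⁻¹ := by
    have h1 : fm^2 = φ (m^2) := by rw [hfmdef, map_pow]
    rw [h1, hm2, map_mul, map_inv]
  have hφr : φ r ∈ seriesN N (b+1) :=
    Descent14.phi_mem_seriesN φ hφc hφ2 N hNnorm hNopen hφN hr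
  haveI hnormb1 := Descent14.seriesN_normal N hNnorm hNopen (b+1)
  have hz1 : m^2*fm^2 ∈ seriesN N (b+1) := by
    have hkey : m^2*fm^2 = ((n * φ n) * ((φ n)⁻¹ * r⁻¹ * φ n)) * (φ r)⁻¹ := by
      rw [hm2, hfm2]; group
    rw [hkey]
    refine Subgroup.mul_mem _ (Subgroup.mul_mem _ hcos ?_) (Subgroup.inv_mem _ hφr)
    have := hnormb1.conj_mem r⁻¹ (Subgroup.inv_mem _ hr) (φ n)⁻¹
    simpa using this
  -- Step 2: climb
  have hclimb : ∀ d : ℕ, a + d ≤ b → c ∈ seriesN N (a + d) := by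
    intro d
    induction d with
    | zero => intro _; simpa using hc
    | succ d IH =>
        intro hle
        have hcj : c ∈ seriesN N (a+d) := IH (by omega)
        have hkey : c^2 = (m^2*fm^2) * (fm⁻¹ * ⁅c⁻¹,m⁻¹⁆ * fm) := by
          rw [hcdef]
          simp only [commutatorElement_def, pow_two]; group
        have hcsq : c^2 ∈ seriesN N ((a+d)+2) := by
          rw [hkey]
          refine Subgroup.mul_mem _ ?_ ?_
          · exact Descent14.seriesN_antitone N hNnorm hNopen (by omega) hz1
          · have h1 : ⁅c⁻¹,m⁻¹⁆ ∈ seriesN N ((a+d)+2) :=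
              Descent14.comm_gain2_mem N hNnorm hNopen hpow
                (Subgroup.inv_mem _ hcj) (Subgroup.inv_mem _ hm) (by omega)
            haveI hnorm2 := Descent14.seriesN_normal N hNnorm hNopen ((a+d)+2)
            have := hnorm2.conj_mem _ h1 fm⁻¹
            simpa using this
        have := Descent14.graded_inj N hNnorm hNopen hpow hpro htf (a+d) hcj hcsq
        rwa [show (a+d)+1 = a+(d+1) by omega] at this
  have hcb : c ∈ seriesN N b := by
    have := hclimb (b - a) (by omega)
    rwa [show a+(b-a) = b by omega] at this
  -- Step 3: conclude
  refine ⟨m, hm, ?_⟩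
  have hfinal : n⁻¹ * (φ m⁻¹ * m) = r⁻¹ * ((m^2)⁻¹ * c⁻¹ * m^2) := by
    have hφminv : φ m⁻¹ = fm⁻¹ := by rw [hfmdef, map_inv]
    rw [hφminv, hrdef, hcdef]
    group
  rw [hfinal]
  refine Subgroup.mul_mem _ ?_ ?_
  · exact Descent14.seriesN_antitone N hNnorm hNopen (by omega) (Subgroup.inv_mem _ hr)
  · haveI hnormb := Descent14.seriesN_normal N hNnorm hNopen b
    have := hnormb.conj_mem c⁻¹ (Subgroup.inv_mem _ hcb) (m^2)⁻¹
    simpa using this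
end
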